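/- arXiv:1311.6197 — 11 statements merged into one kernel-verified Lean document; each statement's English description precedes it below -/
import Mathlib

section
/- Let A be a set, let B and C be subsets of A, and let t : B → C be a bijection such that t(a) ≠ a for every a ∈ B. Then there exist three pairwise disjoint subsets B₀, B₁, B₂ of B with B = B₀ ∪ B₁ ∪ B₂ such that t(Bᵢ) ∩ Bᵢ = ∅ for each i ∈ {0, 1, 2}. -/
/-!
Color the points of `B` by three colors so that `a` and `t a` always get different colors;
a partial coloring is recorded by its color classes, as an `IsFreeFamily`. Since `t` is
injective, every point is constrained only by its image and its unique preimage, which block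
at most two colors. Hence any partial coloring can be extended by one more point, and a
maximal partial coloring (Zorn) is total.
-/

open Set Function

namespace Set

theorem exists_notMem_notMem_of_subsingleton {ι : Type*} {S T : Set ι}
    (hS : S.Subsingleton) (hT : T.Subsingleton) (hι : 2 < Nat.card ι) :
    ∃ i, i ∉ S ∧ i ∉ T := by
  by_contra! hcover
  have hunion : S ∪ T = univ := eq_univ_of_forall fun i => by
    by_cases hi : i ∈ S
    · exact Or.inl hi
    · exact Or.inr (hcover i hi)
  have hcard := ncard_union_le S T
  rw [hunion, ncard_univ] at hcard
  have hS₁ : S.ncard ≤ 1 := (ncard_le_one hS.finite).2 fun _ ha _ hb => hS ha hb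
  have hT₁ : T.ncard ≤ 1 := (ncard_le_one hT.finite).2 fun _ ha _ hb => hT ha hb
  omega

end Set

section

variable {α ι : Type*}

structure IsFreeFamily (f : α → α) (s : Set α) (P : ι → Set α) : Prop where
  subset : ∀ i, P i ⊆ s
  pairwiseDisjoint : Pairwise (Disjoint on P)
  disjoint_image : ∀ i, Disjoint (f '' P i) (P i)

namespace IsFreeFamily

variable {f : α → α} {s : Set α}

theorem iUnion_of_isChain {c : Set (ι → Set α)} (hc : ∀ P ∈ c, IsFreeFamily f s P)
    (hchain : IsChain (· ≤ ·) c) : IsFreeFamily f s fun i => ⋃ P ∈ c, P i := by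
  refine ⟨fun i => iUnion₂_subset fun P hP => (hc P hP).subset i, ?_, ?_⟩
  · intro i j hij
    simp only [onFun, disjoint_iUnion_left, disjoint_iUnion_right]
    intro Q hQ P hP
    rcases hchain.total hP hQ with h | h
    · exact ((hc Q hQ).pairwiseDisjoint hij).mono_left (h i)
    · exact ((hc P hP).pairwiseDisjoint hij).mono_right (h j)
  · intro i
    simp only [image_iUnion₂, disjoint_iUnion_left, disjoint_iUnion_right]
    intro Q hQ P hP
    rcases hchain.total hP hQ with h | h
    · exact ((hc Q hQ).disjoint_image i).mono_left (image_mono (h i))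
    · exact ((hc P hP).disjoint_image i).mono_right (h i)

theorem update_insert [DecidableEq ι] {P : ι → Set α} (hP : IsFreeFamily f s P)
    {a : α} {i : ι} (ha : a ∈ s) (hfa : f a ≠ a) (hnew : ∀ j, a ∉ P j) (himage : f a ∉ P i)
    (hpreimage : a ∉ f '' P i) :
    IsFreeFamily f s (update P i (insert a (P i))) := by
  refine ⟨fun j => ?_, fun j k hjk => ?_, fun j => ?_⟩
  · rcases eq_or_ne j i with rfl | hj
    · simpa using insert_subset ha (hP.subset j)
    · simpa [hj] using hP.subset j
  · have hdisj := hP.pairwiseDisjoint hjk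
    simp only [onFun, update_apply]
    split_ifs with hj hk hk
    · exact absurd (hj.trans hk.symm) hjk
    · exact disjoint_insert_left.2 ⟨hnew k, hj ▸ hdisj⟩
    · exact disjoint_insert_right.2 ⟨hnew j, hk ▸ hdisj⟩
    · exact hdisj
  · rcases eq_or_ne j i with rfl | hj
    · simp only [update_self, image_insert_eq, disjoint_insert_left, disjoint_insert_right,
        mem_insert_iff, not_or]
      exact ⟨⟨hfa.symm, hpreimage⟩, himage, hP.disjoint_image j⟩
    · simpa [hj] using hP.disjoint_image j

theorem exists_index_insertable {P : ι → Set α} (hP : IsFreeFamily f s P) (hinj : InjOn f s)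
    (hι : 2 < Nat.card ι) (a : α) : ∃ i, f a ∉ P i ∧ a ∉ f '' P i := by
  have himage : {i | f a ∈ P i}.Subsingleton := fun i hi j hj => by
    by_contra hij
    exact (hP.pairwiseDisjoint hij).notMem_of_mem_left hi hj
  have hpreimage : {i | a ∈ f '' P i}.Subsingleton := by
    rintro i ⟨x, hx, rfl⟩ j ⟨y, hy, hxy⟩
    rw [hinj (hP.subset j hy) (hP.subset i hx) hxy] at hy
    by_contra hij
    exact (hP.pairwiseDisjoint hij).notMem_of_mem_left hx hy
  exact exists_notMem_notMem_of_subsingleton himage hpreimage hι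

end IsFreeFamily

theorem exists_isFreeFamily_iUnion_eq {f : α → α} {s : Set α} (hinj : InjOn f s)
    (hfix : ∀ a ∈ s, f a ≠ a) (hι : 2 < Nat.card ι) :
    ∃ P : ι → Set α, IsFreeFamily f s P ∧ ⋃ i, P i = s := by
  classical
  obtain ⟨P, hP⟩ := zorn_le₀ {P | IsFreeFamily f s P} fun c hc hchain =>
    ⟨_, IsFreeFamily.iUnion_of_isChain hc hchain,
      fun P hP i => subset_biUnion_of_mem (u := fun Q => Q i) hP⟩
  refine ⟨P, hP.prop, (iUnion_subset hP.prop.subset).antisymm fun a ha => ?_⟩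
  by_contra hnew
  simp only [mem_iUnion, not_exists] at hnew
  obtain ⟨i, himage, hpreimage⟩ := hP.prop.exists_index_insertable hinj hι a
  have hle : P ≤ update P i (insert a (P i)) :=
    le_update_iff.2 ⟨subset_insert a (P i), fun _ _ => le_rfl⟩
  have hge := hP.2 (hP.prop.update_insert ha (hfix a ha) hnew himage hpreimage) hle
  exact hnew i (hge i (by simp))

end

/-- Let `A` be a set, `B` and `C` subsets of `A`, and `t : B → C` a
bijection such that `t a ≠ a` for every `a ∈ B`.  Then `B` decomposes into three
pairwise disjoint subsets `B₀, B₁, B₂` such that `t(Bᵢ) ∩ Bᵢ = ∅` for each `i`. -/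
theorem stmt_0 {A : Type*} (B C : Set A) (t : A → A)
    (hbij : Set.BijOn t B C) (hne : ∀ a ∈ B, t a ≠ a) :
    ∃ B₀ B₁ B₂ : Set A,
      B₀ ⊆ B ∧ B₁ ⊆ B ∧ B₂ ⊆ B ∧
      Disjoint B₀ B₁ ∧ Disjoint B₀ B₂ ∧ Disjoint B₁ B₂ ∧
      B = B₀ ∪ B₁ ∪ B₂ ∧
      (t '' B₀) ∩ B₀ = ∅ ∧ (t '' B₁) ∩ B₁ = ∅ ∧ (t '' B₂) ∩ B₂ = ∅ := by
  obtain ⟨P, hP, hcover⟩ := exists_isFreeFamily_iUnion_eq (ι := Fin 3) hbij.injOn hne (by simp)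
  rw [← iSup_eq_iUnion, iSup_fin_three] at hcover
  refine ⟨P 0, P 1, P 2, hP.subset 0, hP.subset 1, hP.subset 2, hP.pairwiseDisjoint (by decide),
    hP.pairwiseDisjoint (by decide), hP.pairwiseDisjoint (by decide), hcover.symm, ?_, ?_, ?_⟩ <;>
    exact disjoint_iff_inter_eq_empty.1 (hP.disjoint_image _)
end

section
/- Let X be a set and let E ⊆ F be subsets of X × X, both symmetric (E = E⁻¹ and F = F⁻¹), and suppose F has bounded geometry: there is M ∈ ℕ such that for every x ∈ X, the set {y ∈ X : (x,y) ∈ F} has at most M elements. Then there exist finitely many elementary antisymmetric sets E₁, …, Eₙ ⊆ X × X such that F is the disjoint union F = E ⊔ diag(F∖E) ⊔ (E₁ ⊔ E₁⁻¹) ⊔ ⋯ ⊔ (Eₙ ⊔ Eₙ⁻¹), where diag(F∖E) = {(x,x) : (x,x) ∈ F and (x,x) ∉ E}. -/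
/-- The inverse of a relation `E ⊆ X × X`: `E⁻¹ = {(x,y) : (y,x) ∈ E}`. -/
def relInv {X : Type*} (E : Set (X × X)) : Set (X × X) := {p | (p.2, p.1) ∈ E}

/-- `G ⊆ X × X` is elementary if it is the graph of a partial bijection. -/
def IsElementary {X : Type*} (G : Set (X × X)) : Prop :=
  (∀ p ∈ G, ∀ q ∈ G, p.1 = q.1 → p.2 = q.2) ∧
  (∀ p ∈ G, ∀ q ∈ G, p.2 = q.2 → p.1 = q.1)

/-- An elementary set is antisymmetric if the set of first coordinates is disjoint from the
set of second coordinates. -/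
def IsAntisymElementary {X : Type*} (G : Set (X × X)) : Prop :=
  IsElementary G ∧ Disjoint (Prod.fst '' G) (Prod.snd '' G)

/-!
The off-diagonal part of `F \ E` is the edge set of a simple graph `G` of degree at most `M`, so
its line graph has degree at most `2M` and, by a Zorn argument, admits a proper colouring with
`2M + 1` colours. Each colour class is a matching; orienting its edges from the smaller to the
larger endpoint for a fixed linear order on `X` gives an elementary antisymmetric set `Eᵢ`
with `Eᵢ ⊔ Eᵢ⁻¹` the colour class.
-/

namespace SimpleGraph

variable {V : Type*}

theorem colorable_of_encard_neighborSet_lt (G : SimpleGraph V) {n : ℕ}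
    (h : ∀ v, (G.neighborSet v).encard < n) : G.Colorable n := by
  -- Zorn: a maximal proper partial colouring, viewed as a set of (vertex, colour) pairs,
  -- colours every vertex, since a vertex sees fewer than `n` colours among its neighbours.
  let Compatible (a b : V × Fin n) : Prop := a.1 ≠ b.1 ∧ (G.Adj a.1 b.1 → a.2 ≠ b.2)
  obtain ⟨R, hR, hmax⟩ := zorn_subset {R | R.Pairwise Compatible} fun c hc hchain =>
    ⟨⋃₀ c, (Set.pairwise_sUnion hchain.directedOn).2 hc, fun _ => Set.subset_sUnion_of_mem⟩
  have hR : R.Pairwise Compatible := hR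
  have hcolored : ∀ v, ∃ i, (v, i) ∈ R := by
    intro v
    by_contra! hv
    set seen := {a ∈ R | G.Adj v a.1}
    have hseen : (Prod.snd '' seen).encard < (Set.univ : Set (Fin n)).encard := calc
      (Prod.snd '' seen).encard ≤ seen.encard := Set.encard_image_le _ _
      _ = (Prod.fst '' seen).encard :=
        (Set.InjOn.encard_image fun a ha b hb hab => hR.eq ha.1 hb.1 fun h => (h.1 hab)).symm
      _ ≤ (G.neighborSet v).encard := Set.encard_le_encard (by rintro _ ⟨a, ha, rfl⟩; exact ha.2)
      _ < n := h v
      _ = _ := by simp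
    obtain ⟨i, hi⟩ := (Set.ne_univ_iff_exists_notMem (Prod.snd '' seen)).1
      fun heq => hseen.ne (by rw [heq])
    have hins : (insert (v, i) R).Pairwise Compatible := Set.pairwise_insert.2 ⟨hR, fun b hb _ =>
      have hbv : v ≠ b.1 := fun hvb => hv b.2 (hvb ▸ hb)
      ⟨⟨hbv, fun hadj hib => hi ⟨b, ⟨hb, hadj⟩, hib.symm⟩⟩,
        ⟨hbv.symm, fun hadj hib => hi ⟨b, ⟨hb, hadj.symm⟩, hib⟩⟩⟩⟩
    exact hv i (hmax hins (Set.subset_insert _ _) (Set.mem_insert _ _))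
  choose c hc using hcolored
  exact ⟨Coloring.mk c fun {v w} hadj =>
    (hR (hc v) (hc w) fun h => hadj.ne (congrArg Prod.fst h)).2 hadj⟩

theorem encard_neighborSet_lineGraph_le (G : SimpleGraph V) {M : ℕ∞}
    (hM : ∀ v, (G.neighborSet v).encard ≤ M) (e : G.edgeSet) :
    (G.lineGraph.neighborSet e).encard ≤ 2 * M := by
  classical
  obtain ⟨⟨x, y⟩, he⟩ := e
  have hsub : Subtype.val '' G.lineGraph.neighborSet ⟨s(x, y), he⟩ ⊆
      G.incidenceSet x ∪ G.incidenceSet y := by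
    rintro _ ⟨f, hf, rfl⟩
    obtain ⟨-, v, hv, hvf⟩ := lineGraph_adj_iff_exists.1 hf
    rcases Sym2.mem_iff.1 hv with rfl | rfl
    exacts [Or.inl ⟨f.2, hvf⟩, Or.inr ⟨f.2, hvf⟩]
  calc (G.lineGraph.neighborSet ⟨s(x, y), he⟩).encard
      = (Subtype.val '' G.lineGraph.neighborSet ⟨s(x, y), he⟩).encard :=
        (Subtype.val_injective.encard_image _).symm
    _ ≤ (G.incidenceSet x).encard + (G.incidenceSet y).encard :=
        (Set.encard_le_encard hsub).trans (Set.encard_union_le _ _)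
    _ ≤ M + M := by
        rw [Set.encard_congr (G.incidenceSetEquivNeighborSet x),
          Set.encard_congr (G.incidenceSetEquivNeighborSet y)]
        exact add_le_add (hM x) (hM y)
    _ = 2 * M := (two_mul M).symm

namespace Coloring

variable {G : SimpleGraph V} {α : Type*} (C : G.lineGraph.Coloring α)

theorem eq_of_mem_of_mem_image_colorClass {i : α} {e f : Sym2 V}
    (he : e ∈ Subtype.val '' C.colorClass i) (hf : f ∈ Subtype.val '' C.colorClass i)
    {v : V} (hve : v ∈ e) (hvf : v ∈ f) : e = f := by
  obtain ⟨e, hei, rfl⟩ := he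
  obtain ⟨f, hfi, rfl⟩ := hf
  by_contra hne
  exact C.not_adj_of_mem_colorClass hei hfi
    (lineGraph_adj_iff_exists.2 ⟨fun h => hne (congrArg _ h), v, hve, hvf⟩)

theorem iUnion_image_colorClass : ⋃ i, Subtype.val '' C.colorClass i = G.edgeSet := by
  rw [← Set.image_iUnion, Set.iUnion_eq_univ_iff.2 fun e => ⟨C e, C.mem_colorClass e⟩,
    Set.image_univ, Subtype.range_coe]

theorem disjoint_image_colorClass {i j : α} (hij : i ≠ j) :
    Disjoint (Subtype.val '' C.colorClass i) (Subtype.val '' C.colorClass j) :=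
  (Set.disjoint_image_iff Subtype.val_injective).2 ((Set.disjoint_singleton.2 hij).preimage C)

end Coloring

end SimpleGraph

theorem relInv_diff {X : Type*} (R S : Set (X × X)) : relInv (R \ S) = relInv R \ relInv S := rfl

theorem preimage_sym2Mk_image_sym2Mk {X : Type*} {R : Set (X × X)} (hR : relInv R = R) :
    Sym2.mk.uncurry ⁻¹' (Sym2.mk.uncurry '' R) = R := by
  refine (Set.subset_preimage_image _ _).antisymm' ?_
  rintro p ⟨q, hq, hqp⟩
  rcases Sym2.mk_eq_mk_iff.1 hqp.symm with rfl | rfl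
  exacts [hq, hR ▸ hq]

theorem preimage_sym2Mk_edgeSet_fromEdgeSet {X : Type*} {R : Set (X × X)} (hR : relInv R = R) :
    Sym2.mk.uncurry ⁻¹' (SimpleGraph.fromEdgeSet (Sym2.mk.uncurry '' R)).edgeSet =
      {p ∈ R | p.1 ≠ p.2} := by
  ext ⟨x, y⟩
  rw [SimpleGraph.edgeSet_fromEdgeSet, Set.preimage_sdiff, preimage_sym2Mk_image_sym2Mk hR]
  simp

section Orient

variable {V : Type*} [LinearOrder V] {C : Set (Sym2 V)}

def orient (C : Set (Sym2 V)) : Set (V × V) := {p | p.1 < p.2 ∧ s(p.1, p.2) ∈ C}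

theorem orient_union_relInv_orient (hC : ∀ e ∈ C, ¬e.IsDiag) :
    orient C ∪ relInv (orient C) = Sym2.mk.uncurry ⁻¹' C := by
  ext ⟨x, y⟩
  simp only [orient, relInv, Set.mem_union, Set.mem_ofPred_eq, Set.mem_preimage,
    Function.uncurry_apply_pair, Sym2.eq_swap (a := y)]
  constructor
  · rintro (⟨-, h⟩ | ⟨-, h⟩) <;> exact h
  · intro h
    rcases lt_trichotomy x y with hlt | rfl | hgt
    · exact Or.inl ⟨hlt, h⟩
    · exact absurd (Sym2.mk_isDiag_iff.2 rfl) (hC _ h)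
    · exact Or.inr ⟨hgt, h⟩

theorem disjoint_orient_relInv_orient : Disjoint (orient C) (relInv (orient C)) :=
  Set.disjoint_left.2 fun _ hp hq => lt_asymm hp.1 hq.1

theorem isAntisymElementary_orient (hC : ∀ e ∈ C, ∀ f ∈ C, ∀ v ∈ e, v ∈ f → e = f) :
    IsAntisymElementary (orient C) := by
  refine ⟨⟨?_, ?_⟩, Set.disjoint_left.2 ?_⟩
  · rintro ⟨x, y⟩ ⟨-, hp⟩ ⟨x', y'⟩ ⟨-, hq⟩ (rfl : x = x')
    exact Sym2.congr_right.1 (hC _ hp _ hq x (Sym2.mem_mk_left x y) (Sym2.mem_mk_left x y'))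
  · rintro ⟨x, y⟩ ⟨-, hp⟩ ⟨x', y'⟩ ⟨-, hq⟩ (rfl : y = y')
    exact Sym2.congr_left.1 (hC _ hp _ hq y (Sym2.mem_mk_right x y) (Sym2.mem_mk_right x' y))
  · rintro _ ⟨⟨x, y⟩, ⟨hxy, hp⟩, rfl⟩ ⟨⟨x', y'⟩, ⟨hxy', hq⟩, hyx : y' = x⟩
    subst hyx
    -- the two edges share `y'`, so `s(y', y) = s(x', y')`, forcing `y = x'`: then `y' < y < y'`
    have hyx' := hC _ hp _ hq y' (Sym2.mem_mk_left y' y) (Sym2.mem_mk_right x' y')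
    rw [Sym2.eq_swap (a := x'), Sym2.congr_right] at hyx'
    exact lt_asymm hxy (hyx' ▸ hxy')

end Orient

/-- If `E ⊆ F` are symmetric subsets of `X × X` and `F` has bounded
geometry, then there are elementary antisymmetric sets `E₁, …, Eₙ` such that
`F = E ⊔ diag(F ∖ E) ⊔ (E₁ ⊔ E₁⁻¹) ⊔ ⋯ ⊔ (Eₙ ⊔ Eₙ⁻¹)` is a disjoint union. -/
theorem stmt_1 {X : Type*} (E F : Set (X × X)) (hEF : E ⊆ F)
    (hEsymm : relInv E = E) (hFsymm : relInv F = F)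
    (M : ℕ)
    (hbg : ∀ x : X, ({y | (x, y) ∈ F}).Finite ∧ ({y | (x, y) ∈ F}).ncard ≤ M) :
    ∃ (n : ℕ) (Es : Fin n → Set (X × X)),
      (∀ i, IsAntisymElementary (Es i)) ∧
      F = E ∪ {p ∈ F \ E | p.1 = p.2} ∪ (⋃ i, Es i ∪ relInv (Es i)) ∧
      Disjoint E {p ∈ F \ E | p.1 = p.2} ∧
      (∀ i, Disjoint E (Es i ∪ relInv (Es i))) ∧
      (∀ i, Disjoint {p ∈ F \ E | p.1 = p.2} (Es i ∪ relInv (Es i))) ∧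
      (∀ i, Disjoint (Es i) (relInv (Es i))) ∧
      (∀ i j, i ≠ j → Disjoint (Es i ∪ relInv (Es i)) (Es j ∪ relInv (Es j))) := by
  classical
  let _ : LinearOrder X := linearOrderOfSTO WellOrderingRel
  let G := SimpleGraph.fromEdgeSet (Sym2.mk.uncurry '' (F \ E))
  have hG : Sym2.mk.uncurry ⁻¹' G.edgeSet = {p ∈ F \ E | p.1 ≠ p.2} :=
    preimage_sym2Mk_edgeSet_fromEdgeSet (by rw [relInv_diff, hEsymm, hFsymm])
  have hdeg : ∀ v, (G.neighborSet v).encard ≤ M := fun v => calc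
    (G.neighborSet v).encard ≤ {y | (v, y) ∈ F}.encard :=
      Set.encard_le_encard fun y hy => ((Set.ext_iff.1 hG (v, y)).1 hy).1.1
    _ = {y | (v, y) ∈ F}.ncard := (hbg v).1.cast_ncard_eq.symm
    _ ≤ M := by exact_mod_cast (hbg v).2
  obtain ⟨C⟩ := G.lineGraph.colorable_of_encard_neighborSet_lt (n := 2 * M + 1) fun e =>
    (G.encard_neighborSet_lineGraph_le hdeg e).trans_lt (by norm_cast; omega)
  let Es i := orient (Subtype.val '' C.colorClass i)
  have hEs i : Es i ∪ relInv (Es i) = Sym2.mk.uncurry ⁻¹' (Subtype.val '' C.colorClass i) :=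
    orient_union_relInv_orient fun _ ⟨e, _, he⟩ => he ▸ G.not_isDiag_of_mem_edgeSet e.2
  have hEsF i : Es i ∪ relInv (Es i) ⊆ {p ∈ F \ E | p.1 ≠ p.2} :=
    hEs i ▸ hG ▸ Set.preimage_mono (Subtype.coe_image_subset _ _)
  refine ⟨2 * M + 1, Es, fun i => isAntisymElementary_orient fun e he f hf v =>
      C.eq_of_mem_of_mem_image_colorClass he hf, ?_,
    Set.disjoint_left.2 fun p hpE hpD => hpD.1.2 hpE,
    fun i => Set.disjoint_left.2 fun p hpE hp => (hEsF i hp).1.2 hpE,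
    fun i => Set.disjoint_left.2 fun p hpD hp => (hEsF i hp).2 hpD.2,
    fun i => disjoint_orient_relInv_orient, fun i j hij => ?_⟩
  · simp_rw [hEs, ← Set.preimage_iUnion, C.iUnion_image_colorClass, hG]
    ext p
    by_cases hpE : p ∈ E
    · simp [hpE, hEF hpE]
    · by_cases hp : p.1 = p.2 <;> simp [hpE, hp]
  · rw [hEs, hEs]
    exact (C.disjoint_image_colorClass hij).preimage _
end

section
/- Let X be a set, let E ⊆ X × X satisfy bounded geometry (there is M ∈ ℕ such that for every x ∈ X, |{y : (x,y) ∈ E ∪ E⁻¹}| ≤ M), let A, B ⊆ X, let t : A → B be a bijection, and let n ≥ 1 be such that {(t(x), x) : x ∈ A} ⊆ E^{∘n}. Then there exist m ≥ 1 and a partition A = A₁ ⊔ ⋯ ⊔ A_m such that for each i = 1, …, m there are partial bijections s_i^1, …, s_i^n (each a bijection between two subsets of X) with: (a) the domain of s_i^1 is A_i and for every x ∈ A_i, t(x) = s_i^n(s_i^{n−1}(⋯ s_i^1(x) ⋯)); (b) for every j and every x in the domain of s_i^j, (s_i^j(x), x) ∈ E; (c) for every j = 1, …, n−1, the range of s_i^j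 equals the domain of s_i^{j+1}; (d) each s_i^j is either the identity map of its domain, or its range is disjoint from its domain. -/
/-- Composition of relations: `E ∘ F = {(x,y) : ∃ z, (x,z) ∈ E ∧ (z,y) ∈ F}`. -/
def relComp {X : Type*} (E F : Set (X × X)) : Set (X × X) :=
  {p | ∃ z, (p.1, z) ∈ E ∧ (z, p.2) ∈ F}

/-- Iterated composition `E^{∘n}`; by convention `E^{∘0}` is the diagonal, so that
`E^{∘1} = E`. -/
def relPow {X : Type*} (E : Set (X × X)) : ℕ → Set (X × X)
  | 0 => {p | p.1 = p.2}
  | n + 1 => relComp E (relPow E n)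


/-!
Choose for every `x ∈ A` an `E`-chain `x = p x 0, p x 1, …, p x n = t x`, and call `x ≠ x'`
in conflict when their chains meet. All conflict partners of `x` lie in the fibres of the
relations `E^{∘k}` (`k ≤ n`) over the `n + 1` points of the chain of `x`, and bounded geometry
bounds these fibres uniformly, so the conflict graph has bounded degree and a greedy colouring
along a well-order uses finitely many colours. Refining the colour classes by the set of steps at
which a chain stays put gives the pieces: on a piece the chains are pairwise disjoint, so the
`j`-th step `p x j ↦ p x (j + 1)` is a well-defined partial bijection, and its range can only meet
its domain at stationary steps.
-/

open Finset in
theorem Set.encard_biUnion_le_encard_mul {ι α : Type*} {t : Set ι} (ht : t.Finite)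
    {s : ι → Set α} {b : ℕ∞} (hs : ∀ i ∈ t, (s i).encard ≤ b) :
    (⋃ i ∈ t, s i).encard ≤ t.encard * b := by
  lift t to Finset ι using ht
  calc (⋃ i ∈ (t : Set ι), s i).encard
      ≤ ∑ i ∈ t, (s i).encard := t.set_encard_biUnion_le s
    _ ≤ ∑ _ ∈ t, b := sum_le_sum hs
    _ = (t : Set ι).encard * b := by simp [Set.encard_coe_eq_coe_finsetCard]

theorem SimpleGraph.colorable_of_forall_encard_neighborSet_le {V : Type*} (G : SimpleGraph V)
    {K : ℕ} (h : ∀ v, (G.neighborSet v).encard ≤ K) : G.Colorable (K + 1) := by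
  classical
  have avoid : ∀ (f : V → Fin (K + 1)) (v : V), ∃ a, a ∉ f '' G.neighborSet v := by
    intro f v
    by_contra! hall
    have : (Set.univ : Set (Fin (K + 1))).encard ≤ K := by
      rw [← Set.eq_univ_of_forall hall]
      exact (Set.encard_image_le f _).trans (h v)
    simp only [Set.encard_univ, ENat.card_eq_coe_fintype_card, Fintype.card_fin] at this
    exact absurd this (by exact_mod_cast K.not_succ_le_self)
  have wf : WellFounded (WellOrderingRel (α := V)) := IsWellFounded.wf
  -- Greedy colouring: each vertex avoids the colours of its neighbours that come earlier.
  let F : ∀ v, (∀ w, WellOrderingRel w v → Fin (K + 1)) → Fin (K + 1) := fun v rec =>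
    (avoid (fun w => if hw : WellOrderingRel w v then rec w hw else 0) v).choose
  let c : V → Fin (K + 1) := wf.fix F
  have hc : ∀ v w, WellOrderingRel w v → G.Adj v w → c v ≠ c w := by
    intro v w hwv hadj heq
    have hv : c v ∉ (fun w => if WellOrderingRel w v then c w else 0) '' G.neighborSet v := by
      rw [show c v = F v fun w _ => c w from wf.fix_eq F v]
      exact (avoid _ v).choose_spec
    exact hv ⟨w, hadj, by simp [hwv, heq]⟩
  refine ⟨SimpleGraph.Coloring.mk c fun {v w} hadj => ?_⟩
  rcases trichotomous_of WellOrderingRel v w with hvw | rfl | hwv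
  · exact (hc w v hvw hadj.symm).symm
  · exact absurd hadj G.irrefl
  · exact hc v w hwv hadj

open Function in
theorem exists_fin_partition_fibers {X α : Type*} [Fintype α] [Nonempty α] (A : Set X)
    (g : X → α) :
    ∃ m : ℕ, 1 ≤ m ∧ ∃ As : Fin m → Set X, Pairwise (Disjoint on As) ∧
      (⋃ i, As i) = A ∧ ∀ i, ∃ a, As i = A ∩ g ⁻¹' {a} := by
  let e := Fintype.equivFin α
  refine ⟨Fintype.card α, Fintype.card_pos, fun i => A ∩ g ⁻¹' {e.symm i}, ?_, ?_,
    fun i => ⟨_, rfl⟩⟩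
  · intro i j hij
    exact Set.disjoint_left.2 fun x hi hj => hij (e.symm.injective (hi.2.symm.trans hj.2))
  · ext x
    simp only [Set.mem_iUnion, Set.mem_inter_iff, Set.mem_preimage, Set.mem_singleton_iff]
    exact ⟨fun ⟨_, hx, _⟩ => hx, fun hx => ⟨e (g x), hx, (e.symm_apply_apply _).symm⟩⟩

section Relations

variable {X : Type*} {E : Set (X × X)}

theorem exists_chain_of_mem_relPow : ∀ {n : ℕ} {a b : X}, (a, b) ∈ relPow E n →
    ∃ q : ℕ → X, q 0 = b ∧ q n = a ∧ ∀ k < n, (q (k + 1), q k) ∈ E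
  | 0, _, b, h => ⟨fun _ => b, rfl, h.symm, by simp⟩
  | n + 1, a, _, ⟨z, haz, hzb⟩ => by
    obtain ⟨q, hq0, hqn, hq⟩ := exists_chain_of_mem_relPow hzb
    refine ⟨Function.update q (n + 1) a, by simpa using hq0, by simp, fun k hk => ?_⟩
    rcases Nat.lt_succ_iff_lt_or_eq.1 hk with hk | rfl
    · simpa [Function.update_apply, hk.ne, (Nat.lt_succ_of_lt hk).ne] using hq k hk
    · simpa [Function.update_apply, hqn] using haz

theorem mem_relPow_of_chain {q : ℕ → X} :
    ∀ {k : ℕ}, (∀ i < k, (q (i + 1), q i) ∈ E) → (q k, q 0) ∈ relPow E k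
  | 0, _ => rfl
  | k + 1, h => ⟨q k, h k k.lt_succ_self,
      mem_relPow_of_chain fun i hi => h i (hi.trans k.lt_succ_self)⟩

theorem encard_relPow_fiber_le {M : ℕ} (hE : ∀ y, {x | (y, x) ∈ E}.encard ≤ M) (k : ℕ)
    (y : X) : {x | (y, x) ∈ relPow E k}.encard ≤ (M : ℕ∞) ^ k := by
  induction k generalizing y with
  | zero => simp [relPow]
  | succ k ih =>
    have hfiber : {x | (y, x) ∈ relPow E (k + 1)} =
        ⋃ z ∈ {z | (y, z) ∈ E}, {x | (z, x) ∈ relPow E k} := by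
      ext x
      simp [relPow, relComp]
    rw [hfiber, pow_succ']
    exact (Set.encard_biUnion_le_encard_mul (Set.finite_of_encard_le_coe (hE y))
      fun z _ => ih z).trans (mul_le_mul_left (hE y) _)

end Relations

section Chains

variable {X : Type*}

def pathConflictGraph (A : Set X) (n : ℕ) (p : X → ℕ → X) : SimpleGraph X :=
  SimpleGraph.fromRel fun x y => x ∈ A ∧ y ∈ A ∧ ∃ j ≤ n, ∃ k ≤ n, p x j = p y k

open Finset in
theorem encard_neighborSet_pathConflictGraph_le {E : Set (X × X)} {M : ℕ}
    (hE : ∀ y, {x | (y, x) ∈ E}.encard ≤ M) {A : Set X} {n : ℕ} {p : X → ℕ → X}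
    (hp : ∀ x ∈ A, ∀ k ≤ n, (p x k, x) ∈ relPow E k) (x : X) :
    ((pathConflictGraph A n p).neighborSet x).encard ≤
      ((n + 1) * ∑ k ∈ range (n + 1), M ^ k : ℕ) := by
  have hsub : (pathConflictGraph A n p).neighborSet x ⊆
      ⋃ j ∈ range (n + 1), ⋃ k ∈ range (n + 1), {y | (p x j, y) ∈ relPow E k} := by
    rintro y ⟨-, ⟨-, hy, j, hj, k, hk, hjk⟩ | ⟨hy, -, k, hk, j, hj, hjk⟩⟩ <;>
      simp only [Set.mem_iUnion, mem_range, Set.mem_ofPred_eq]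
    · exact ⟨j, by omega, k, by omega, hjk ▸ hp y hy k hk⟩
    · exact ⟨j, by omega, k, by omega, hjk.symm ▸ hp y hy k hk⟩
  calc ((pathConflictGraph A n p).neighborSet x).encard
      ≤ ∑ j ∈ range (n + 1), ∑ k ∈ range (n + 1), (M : ℕ∞) ^ k :=
        (Set.encard_le_encard hsub).trans <| (set_encard_biUnion_le _ _).trans <|
          sum_le_sum fun j _ => (set_encard_biUnion_le _ _).trans <|
            sum_le_sum fun k _ => encard_relPow_fiber_le hE k _
    _ = ((n + 1) * ∑ k ∈ range (n + 1), M ^ k : ℕ) := by simp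

/-- The partial bijections are the total maps `s j` restricted to the sets `D j`. -/
def HasPartialBijFactorization (E : Set (X × X)) (n : ℕ) (t : X → X) (S : Set X) : Prop :=
  ∃ (D : Fin (n + 1) → Set X) (s : Fin n → X → X),
    D 0 = S ∧
    (∀ j : Fin n, Set.InjOn (s j) (D j.castSucc)) ∧
    (∀ j : Fin n, s j '' D j.castSucc = D j.succ) ∧
    (∀ j : Fin n, ∀ x ∈ D j.castSucc, (s j x, x) ∈ E) ∧
    (∀ x ∈ S, ∃ y : Fin (n + 1) → X, y 0 = x ∧ y (Fin.last n) = t x ∧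
      ∀ j : Fin n, y j.succ = s j (y j.castSucc)) ∧
    (∀ j : Fin n, (∀ x ∈ D j.castSucc, s j x = x) ∨
      Disjoint (s j '' D j.castSucc) (D j.castSucc))

theorem hasPartialBijFactorization_of_disjoint_chains {E : Set (X × X)} {n : ℕ} {t : X → X}
    {S : Set X} {p : X → ℕ → X} (h0 : ∀ x ∈ S, p x 0 = x) (hn : ∀ x ∈ S, p x n = t x)
    (hE : ∀ x ∈ S, ∀ k < n, (p x (k + 1), p x k) ∈ E)
    (hsep : ∀ x ∈ S, ∀ y ∈ S, ∀ j ≤ n, ∀ k ≤ n, p x j = p y k → x = y)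
    (hstat : ∀ x ∈ S, ∀ y ∈ S, ∀ j : Fin n, p x (j + 1) = p x j ↔ p y (j + 1) = p y j) :
    HasPartialBijFactorization E n t S := by
  have hinj : ∀ j ≤ n, Function.Injective fun x : S => p x j := fun j hj x y hxy =>
    Subtype.ext (hsep x x.2 y y.2 j hj j hj hxy)
  let s : Fin n → X → X := fun j =>
    Function.extend (fun x : S => p x j) (fun x : S => p x (j + 1)) id
  have hs : ∀ (j : Fin n), ∀ x ∈ S, s j (p x j.castSucc) = p x j.succ := fun j x hx =>
    (hinj j j.isLt.le).extend_apply _ _ ⟨x, hx⟩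
  refine ⟨fun j => (fun x => p x j) '' S, s, ?_, ?_, ?_, ?_, ?_, fun j => ?_⟩
  · simpa using (Set.image_congr h0).trans (Set.image_id S)
  · rintro j _ ⟨x, hx, rfl⟩ _ ⟨y, hy, rfl⟩ hxy
    rw [hs j x hx, hs j y hy] at hxy
    rw [hsep x hx y hy _ j.isLt _ j.isLt hxy]
  · intro j
    rw [Set.image_image]
    exact Set.image_congr fun x hx => hs j x hx
  · rintro j _ ⟨x, hx, rfl⟩
    rw [hs j x hx]
    exact hE x hx j j.isLt
  · exact fun x hx => ⟨fun j => p x j, by simpa using h0 x hx, by simpa using hn x hx,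
      fun j => (hs j x hx).symm⟩
  by_cases hid : ∀ x ∈ S, p x (j + 1) = p x j
  · left
    rintro _ ⟨x, hx, rfl⟩
    exact (hs j x hx).trans (hid x hx)
  · right
    push Not at hid
    obtain ⟨x₀, hx₀, hmove⟩ := hid
    rw [Set.disjoint_left]
    rintro _ ⟨_, ⟨x, hx, rfl⟩, rfl⟩ ⟨y, hy, hyx⟩
    rw [hs j x hx] at hyx
    obtain rfl := hsep y hy x hx j j.isLt.le _ j.isLt hyx
    exact hmove ((hstat y hy x₀ hx₀ j).1 hyx.symm)

end Chains

theorem stmt_2_general {X : Type*} (E : Set (X × X)) (M : ℕ)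
    (hbg : ∀ x : X, ({y | (x, y) ∈ E ∪ relInv E}).Finite ∧
      ({y | (x, y) ∈ E ∪ relInv E}).ncard ≤ M)
    (A : Set X) (t : X → X)
    (n : ℕ)
    (hgraph : {p : X × X | ∃ x ∈ A, p = (t x, x)} ⊆ relPow E n) :
    ∃ (m : ℕ), 1 ≤ m ∧ ∃ As : Fin m → Set X,
      (∀ i j, i ≠ j → Disjoint (As i) (As j)) ∧ (⋃ i, As i) = A ∧
      ∀ i, ∃ (D : Fin (n + 1) → Set X) (s : Fin n → X → X),
        D 0 = As i ∧
        (∀ j : Fin n, Set.InjOn (s j) (D j.castSucc)) ∧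
        (∀ j : Fin n, s j '' D j.castSucc = D j.succ) ∧
        (∀ j : Fin n, ∀ x ∈ D j.castSucc, (s j x, x) ∈ E) ∧
        (∀ x ∈ As i, ∃ y : Fin (n + 1) → X, y 0 = x ∧ y (Fin.last n) = t x ∧
          ∀ j : Fin n, y j.succ = s j (y j.castSucc)) ∧
        (∀ j : Fin n, (∀ x ∈ D j.castSucc, s j x = x) ∨
          Disjoint (s j '' D j.castSucc) (D j.castSucc)) := by
  classical
  have hfiber : ∀ y, {x | (y, x) ∈ E}.encard ≤ M := fun y =>
    (Set.encard_le_encard fun _ hx => Or.inl hx).trans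
      (Set.encard_le_coe_iff_finite_ncard_le.2 (hbg y))
  choose! p hp0 hpn hpE using fun x hx => exists_chain_of_mem_relPow (hgraph ⟨x, hx, rfl⟩)
  have hpow : ∀ x ∈ A, ∀ k ≤ n, (p x k, x) ∈ relPow E k := fun x hx k hk => by
    simpa only [hp0 x hx] using mem_relPow_of_chain (q := p x) fun i hi => hpE x hx i (by omega)
  obtain ⟨c⟩ := (pathConflictGraph A n p).colorable_of_forall_encard_neighborSet_le
    (encard_neighborSet_pathConflictGraph_le hfiber hpow)
  obtain ⟨m, hm, As, hdisj, hcover, hAs⟩ :=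
    exists_fin_partition_fibers A fun x => (c x, {j : Fin n | p x (j + 1) = p x j})
  refine ⟨m, hm, As, hdisj, hcover, fun i => ?_⟩
  obtain ⟨a, hAi⟩ := hAs i
  rw [hAi]
  refine hasPartialBijFactorization_of_disjoint_chains (fun x hx => hp0 x hx.1)
    (fun x hx => hpn x hx.1) (fun x hx => hpE x hx.1) ?_ fun x hx y hy j => ?_
  · intro x hx y hy j hj k hk hxy
    by_contra hne
    exact c.valid ⟨hne, Or.inl ⟨hx.1, hy.1, j, hj, k, hk, hxy⟩⟩
      (congrArg Prod.fst (hx.2.trans hy.2.symm))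
  · exact Set.ext_iff.1 (congrArg Prod.snd (hx.2.trans hy.2.symm)) j

/-- If `E` has bounded geometry, `t : A → B` is a bijection and the graph
`{(t x, x) : x ∈ A}` is contained in `E^{∘n}` (`n ≥ 1`), then `A` can be partitioned into
finitely many pieces `A₁, …, A_m` on each of which `t` factors as a composition of `n`
partial bijections `s_i^1, …, s_i^n` with graphs contained in `E`, consecutive ranges
matching domains, and each `s_i^j` either the identity on its domain or with range
disjoint from its domain. -/
theorem stmt_2 {X : Type*} (E : Set (X × X)) (M : ℕ)
    (hbg : ∀ x : X, ({y | (x, y) ∈ E ∪ relInv E}).Finite ∧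
      ({y | (x, y) ∈ E ∪ relInv E}).ncard ≤ M)
    (A B : Set X) (t : X → X) (hbij : Set.BijOn t A B)
    (n : ℕ) (hn : 1 ≤ n)
    (hgraph : {p : X × X | ∃ x ∈ A, p = (t x, x)} ⊆ relPow E n) :
    ∃ (m : ℕ), 1 ≤ m ∧ ∃ As : Fin m → Set X,
      (∀ i j, i ≠ j → Disjoint (As i) (As j)) ∧ (⋃ i, As i) = A ∧
      ∀ i, ∃ (D : Fin (n + 1) → Set X) (s : Fin n → X → X),
        D 0 = As i ∧
        (∀ j : Fin n, Set.InjOn (s j) (D j.castSucc)) ∧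
        (∀ j : Fin n, s j '' D j.castSucc = D j.succ) ∧
        (∀ j : Fin n, ∀ x ∈ D j.castSucc, (s j x, x) ∈ E) ∧
        (∀ x ∈ As i, ∃ y : Fin (n + 1) → X, y 0 = x ∧ y (Fin.last n) = t x ∧
          ∀ j : Fin n, y j.succ = s j (y j.castSucc)) ∧
        (∀ j : Fin n, (∀ x ∈ D j.castSucc, s j x = x) ∨
          Disjoint (s j '' D j.castSucc) (D j.castSucc)) :=
  stmt_2_general E M hbg A t n hgraph
end

section
/- Let X and Y be extended metric spaces (distances may take the value ∞), and let f : X → Y and g : Y → X be maps such that: (i) for every r < ∞ there is s < ∞ such that d(x₁,x₂) ≤ r implies d(f(x₁), f(x₂)) ≤ s, and for every r < ∞ there is s < ∞ such that d(y₁,y₂) ≤ r implies d(g(y₁), g(y₂)) ≤ s; (ii) there is C < ∞ with d(f(g(y)), y) ≤ C for all y ∈ Y and d(g(f(x)), x) ≤ C for all x ∈ X. Then there exist subsets X' ⊆ X and Y' ⊆ Y such that f restricts to a bijection from X' onto Y', and there is R < ∞ such that every point of X lies within distance R of some point of X' and every point of Y lies within distance R of some point of Y'. -/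
open scoped ENNReal

/-!
Any map restricts to a bijection from a set of representatives of its fibres onto its image.
If `g ∘ f` moves points by at most `C`, every fibre of `f` has diameter at most `2 * C`, so
these representatives are `2 * C`-dense in `X`; if `f ∘ g` moves points by at most `C`, the
image of `f` is `C`-dense in `Y`.
-/

section CoarseInverse

variable {X Y : Type*} {f : X → Y} {g : Y → X} {C : ℝ≥0∞}

lemma edist_le_two_mul_of_map_eq [PseudoEMetricSpace X] (hgf : ∀ x, edist (g (f x)) x ≤ C)
    {x₁ x₂ : X} (h : f x₁ = f x₂) : edist x₁ x₂ ≤ 2 * C :=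
  calc edist x₁ x₂ ≤ edist x₁ (g (f x₁)) + edist (g (f x₂)) x₂ := h ▸ edist_triangle _ _ _
    _ ≤ C + C := add_le_add (edist_comm x₁ _ ▸ hgf x₁) (hgf x₂)
    _ = 2 * C := (two_mul C).symm

lemma exists_bijOn_range_of_edist_comp_le [PseudoEMetricSpace X]
    (hgf : ∀ x, edist (g (f x)) x ≤ C) :
    ∃ X' : Set X, Set.BijOn f X' (Set.range f) ∧ ∀ x, ∃ x' ∈ X', edist x x' ≤ 2 * C := by
  obtain ⟨X', -, hbij⟩ := Set.exists_subset_bijOn Set.univ f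
  rw [Set.image_univ] at hbij
  refine ⟨X', hbij, fun x => ?_⟩
  obtain ⟨x', hx', hfx'⟩ := hbij.surjOn (Set.mem_range_self x)
  exact ⟨x', hx', edist_le_two_mul_of_map_eq hgf hfx'.symm⟩

lemma exists_mem_range_edist_le [PseudoEMetricSpace Y] (hfg : ∀ y, edist (f (g y)) y ≤ C)
    (y : Y) : ∃ y' ∈ Set.range f, edist y y' ≤ C :=
  ⟨f (g y), Set.mem_range_self _, edist_comm y _ ▸ hfg y⟩

end CoarseInverse

theorem stmt_3_general {X Y : Type*} [EMetricSpace X] [EMetricSpace Y]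
    (f : X → Y) (g : Y → X)
    (hclose : ∃ C : ℝ≥0∞, C < ⊤ ∧ (∀ y : Y, edist (f (g y)) y ≤ C) ∧
      (∀ x : X, edist (g (f x)) x ≤ C)) :
    ∃ (X' : Set X) (Y' : Set Y), Set.BijOn f X' Y' ∧
      ∃ R : ℝ≥0∞, R < ⊤ ∧ (∀ x : X, ∃ x' ∈ X', edist x x' ≤ R) ∧
        (∀ y : Y, ∃ y' ∈ Y', edist y y' ≤ R) := by
  obtain ⟨C, hC, hfg, hgf⟩ := hclose
  obtain ⟨X', hbij, hX'⟩ := exists_bijOn_range_of_edist_comp_le hgf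
  refine ⟨X', Set.range f, hbij, 2 * C, ENNReal.mul_lt_top ENNReal.ofNat_lt_top hC, hX', ?_⟩
  intro y
  obtain ⟨y', hy', hyy'⟩ := exists_mem_range_edist_le hfg y
  exact ⟨y', hy', hyy'.trans (le_mul_of_one_le_left' one_le_two)⟩

/-- A coarse equivalence `f : X → Y` (with coarse inverse `g`) between
extended metric spaces restricts to a bijection between coarsely dense subsets
`X' ⊆ X` and `Y' ⊆ Y`. -/
theorem stmt_3 {X Y : Type*} [EMetricSpace X] [EMetricSpace Y]
    (f : X → Y) (g : Y → X)
    (hf : ∀ r : ℝ≥0∞, r < ⊤ → ∃ s : ℝ≥0∞, s < ⊤ ∧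
      ∀ x₁ x₂ : X, edist x₁ x₂ ≤ r → edist (f x₁) (f x₂) ≤ s)
    (hg : ∀ r : ℝ≥0∞, r < ⊤ → ∃ s : ℝ≥0∞, s < ⊤ ∧
      ∀ y₁ y₂ : Y, edist y₁ y₂ ≤ r → edist (g y₁) (g y₂) ≤ s)
    (hclose : ∃ C : ℝ≥0∞, C < ⊤ ∧ (∀ y : Y, edist (f (g y)) y ≤ C) ∧
      (∀ x : X, edist (g (f x)) x ≤ C)) :
    ∃ (X' : Set X) (Y' : Set Y), Set.BijOn f X' Y' ∧
      ∃ R : ℝ≥0∞, R < ⊤ ∧ (∀ x : X, ∃ x' ∈ X', edist x x' ≤ R) ∧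
        (∀ y : Y, ∃ y' ∈ Y', edist y y' ≤ R) :=
  stmt_3_general f g hclose
end

section
/- Let H be a complex Hilbert space and let v be a bounded linear operator on H satisfying v v* v = v, where v* denotes the Hilbert-space adjoint of v. Then for every ξ ∈ H the following are equivalent: (i) (v v* + v* v − v − v*) ξ = 0; (ii) v ξ = v v* ξ; (iii) v* ξ = v* v ξ. -/
open ContinuousLinearMap

/-! With `w = v - v v*`, the relation `v v* v = v` and its adjoint `v* v v* = v*` give
`w* w = v v* + v* v - v - v*`, so (i) says `w* w ξ = 0`, i.e. `‖w ξ‖² = 0`, which is (ii).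
For (ii) ↔ (iii), apply `v*`, resp. `v`, to the given equation; this is purely monoid-theoretic,
operators acting on `H` through `ContinuousLinearMap.applyModule`. -/

theorem smul_eq_mul_smul_of_mul_mul_eq {R X : Type*} [Monoid R] [MulAction R X] {a b : R}
    (hb : b * a * b = b) {x : X} (h : a • x = (a * b) • x) : b • x = (b * a) • x :=
  calc b • x = (b * a * b) • x := by rw [hb]
    _ = (b * a) • x := by rw [mul_assoc, mul_smul, ← h, ← mul_smul]

theorem star_mul_mul_star_eq_star {R : Type*} [Monoid R] [StarMul R] {a : R}
    (ha : a * star a * a = a) : star a * a * star a = star a := by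
  simpa [star_mul, mul_assoc] using congrArg star ha

theorem star_sub_mul_star_mul_sub_mul_star {R : Type*} [Ring R] [StarRing R] {a : R}
    (ha : a * star a * a = a) :
    star (a - a * star a) * (a - a * star a) = a * star a + star a * a - a - star a := by
  have h₁ : star a * (a * star a) = star a := by rw [← mul_assoc, star_mul_mul_star_eq_star ha]
  have h₂ : a * star a * (a * star a) = a * star a := by rw [mul_assoc, h₁]
  rw [star_sub, star_mul, star_star, sub_mul, mul_sub, mul_sub, h₁, h₂, ha]
  abel

theorem ContinuousLinearMap.adjoint_mul_self_apply_eq_zero_iff {𝕜 E : Type*} [RCLike 𝕜]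
    [NormedAddCommGroup E] [InnerProductSpace 𝕜 E] [CompleteSpace E] (T : E →L[𝕜] E) (x : E) :
    (adjoint T * T) x = 0 ↔ T x = 0 :=
  SetLike.ext_iff.mp T.ker_adjoint_comp_self x

/-- For a partial isometry `v` on a complex Hilbert space `H`
(`v v* v = v`) and `ξ ∈ H`, the conditions `(v v* + v* v − v − v*) ξ = 0`,
`v ξ = v v* ξ` and `v* ξ = v* v ξ` are equivalent. -/
theorem stmt_5 {H : Type*} [NormedAddCommGroup H] [InnerProductSpace ℂ H] [CompleteSpace H]
    (v : H →L[ℂ] H) (hv : v * adjoint v * v = v) (ξ : H) :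
    ((v * adjoint v + adjoint v * v - v - adjoint v) ξ = 0 ↔
      v ξ = (v * adjoint v) ξ) ∧
    (v ξ = (v * adjoint v) ξ ↔ adjoint v ξ = (adjoint v * v) ξ) := by
  rw [← star_eq_adjoint] at hv ⊢
  have hv' := star_mul_mul_star_eq_star hv
  refine ⟨?_, ⟨smul_eq_mul_smul_of_mul_mul_eq hv', smul_eq_mul_smul_of_mul_mul_eq hv⟩⟩
  rw [← star_sub_mul_star_mul_sub_mul_star hv, star_eq_adjoint,
    adjoint_mul_self_apply_eq_zero_iff, sub_apply, sub_eq_zero]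
end

section
/- Let X be a countable set and let E ⊆ X × X have bounded geometry: there is M ∈ ℕ such that for every x ∈ X, |{y : (x,y) ∈ E ∪ E⁻¹}| ≤ M. Let Δ^E be the Laplacian operator on ℓ²(X; ℂ) associated to E. Then for ξ ∈ ℓ²(X; ℂ), one has Δ^E ξ = 0 if and only if ξ is constant on each equivalence class of the equivalence relation on X generated by E (i.e. ξ(x) = ξ(y) whenever x and y are joined by a finite chain of pairs in E ∪ E⁻¹). -/
/-- The set `{y : (x,y) ∈ E'}` where `E' = (E ∪ E⁻¹) ∖ diagonal`. -/
def lapNbr {X : Type*} (E : Set (X × X)) (x : X) : Set X :=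
  {y | ((x, y) ∈ E ∨ (y, x) ∈ E) ∧ y ≠ x}

/-- The pointwise action of the Laplacian `Δ^E`:
`(Δ^E ξ)(x) = |{y : (x,y) ∈ E'}|·ξ(x) − Σ_{y : (x,y) ∈ E'} ξ(y)`. -/
noncomputable def lapApply {X : Type*} (E : Set (X × X)) (ξ : X → ℂ) (x : X) : ℂ :=
  ((lapNbr E x).ncard : ℂ) * ξ x - ∑ᶠ y ∈ lapNbr E x, ξ y

open Filter Finset
open scoped RealInnerProductSpace

theorem eq_of_norm_le_of_sum_eq_card_smul {ι E : Type*} [NormedAddCommGroup E]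
    [InnerProductSpace ℝ E] {s : Finset ι} {v : ι → E} {w : E} (hle : ∀ i ∈ s, ‖v i‖ ≤ ‖w‖)
    (hsum : ∑ i ∈ s, v i = #s • w) : ∀ i ∈ s, v i = w := by
  have hinner_le : ∀ i ∈ s, ⟪w, v i⟫ ≤ ‖w‖ ^ 2 := fun i hi =>
    (real_inner_le_norm _ _).trans (by rw [sq]; gcongr; exact hle i hi)
  have hinner_eq : ∀ i ∈ s, ⟪w, v i⟫ = ‖w‖ ^ 2 := by
    refine (sum_eq_sum_iff_of_le hinner_le).mp ?_
    rw [← inner_sum, hsum, sum_const, ← Nat.cast_smul_eq_nsmul ℝ, real_inner_smul_right,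
      real_inner_self_eq_norm_sq, nsmul_eq_mul]
  intro i hi
  have hsq : ‖v i‖ ^ 2 ≤ ‖w‖ ^ 2 := pow_le_pow_left₀ (norm_nonneg _) (hle i hi) 2
  have : ‖v i - w‖ ^ 2 ≤ 0 := by
    rw [norm_sub_sq_real, real_inner_comm, hinner_eq i hi]
    linarith
  simpa [sub_eq_zero] using this

theorem Memℓp.tendsto_cofinite_zero {α E : Type*} [NormedAddCommGroup E] {p : ENNReal}
    {f : α → E} (hf : Memℓp f p) (hp : 0 < p.toReal) : Tendsto f cofinite (nhds 0) := by
  rw [tendsto_zero_iff_norm_tendsto_zero]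
  have := (hf.summable hp).tendsto_cofinite_zero.rpow_const (p := p.toReal⁻¹)
    (.inr (by positivity))
  simpa [Real.rpow_rpow_inv (norm_nonneg _) hp.ne', Real.zero_rpow (inv_ne_zero hp.ne')] using this

theorem exists_isMaxOn_norm_of_tendsto_cofinite_zero {α E : Type*} [NormedAddCommGroup E]
    {f : α → E} (hf : Tendsto f cofinite (nhds 0)) {s : Set α} (hs : s.Nonempty) :
    ∃ a ∈ s, IsMaxOn (‖f ·‖) s a := by
  by_cases hpos : ∃ b ∈ s, 0 < ‖f b‖
  · obtain ⟨b, hbs, hb⟩ := hpos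
    have hfin : {a | ¬‖f a‖ < ‖f b‖}.Finite := eventually_cofinite.mp
      ((tendsto_zero_iff_norm_tendsto_zero.mp hf).eventually (gt_mem_nhds hb))
    obtain ⟨a, ⟨ha, has⟩, hmax⟩ :=
      Set.exists_max_image _ (‖f ·‖) (hfin.inter_of_left s) ⟨b, lt_irrefl _, hbs⟩
    refine ⟨a, has, fun c hcs => ?_⟩
    by_cases hc : ‖f c‖ < ‖f b‖
    · exact hc.le.trans (not_lt.mp ha)
    · exact hmax c ⟨hc, hcs⟩
  · push Not at hpos
    obtain ⟨a, has⟩ := hs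
    exact ⟨a, has, fun c hcs => (hpos c hcs).trans (norm_nonneg _)⟩

namespace SimpleGraph

theorem reachable_fromRel_eq_reflTransGen {V : Type*} (r : V → V → Prop) :
    (fromRel r).Reachable = Relation.ReflTransGen fun a b => r a b ∨ r b a := by
  rw [reachable_eq_reflTransGen, ← Relation.transGen_reflGen, ← Relation.transGen_reflGen]
  congr 1
  ext
  simp only [Relation.reflGen_iff, fromRel_adj]
  tauto

variable {V E : Type*} {G : SimpleGraph V} [G.LocallyFinite] {f : V → E}

variable (G) in
def IsHarmonic [AddCommMonoid E] (f : V → E) : Prop :=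
  ∀ v, G.degree v • f v = ∑ w ∈ G.neighborFinset v, f w

theorem isHarmonic_of_forall_adj_eq [AddCommMonoid E] (hf : ∀ v w, G.Adj v w → f w = f v) :
    G.IsHarmonic f := by
  intro v
  rw [sum_congr rfl fun w hw => hf v w ((mem_neighborFinset G v w).mp hw), sum_const,
    card_neighborFinset_eq_degree]

variable [NormedAddCommGroup E] [InnerProductSpace ℝ E]

theorem IsHarmonic.eq_of_adj_of_forall_adj_norm_le (hf : G.IsHarmonic f) {v w : V}
    (hle : ∀ u, G.Adj v u → ‖f u‖ ≤ ‖f v‖) (hvw : G.Adj v w) : f w = f v := by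
  refine eq_of_norm_le_of_sum_eq_card_smul (s := G.neighborFinset v)
    (fun u hu => hle u ((mem_neighborFinset G v u).mp hu)) ?_ w
    ((mem_neighborFinset G v w).mpr hvw)
  rw [card_neighborFinset_eq_degree, hf v]

theorem IsHarmonic.eq_of_reachable_of_isMaxOn (hf : G.IsHarmonic f) {v w : V}
    (hmax : IsMaxOn (‖f ·‖) {u | G.Reachable v u} v) (hvw : G.Reachable v w) : f w = f v := by
  rw [reachable_iff_reflTransGen] at hvw
  induction hvw with
  | refl => rfl
  | @tail u u' hvu huu' ih =>
    have hvu : G.Reachable v u := (reachable_iff_reflTransGen v u).mpr hvu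
    refine (hf.eq_of_adj_of_forall_adj_norm_le (fun x hux => ?_) huu').trans ih
    rw [ih]
    exact hmax (hvu.trans hux.reachable)

theorem IsHarmonic.eq_of_reachable (hf : G.IsHarmonic f) (hf₀ : Tendsto f cofinite (nhds 0))
    {v w : V} (hvw : G.Reachable v w) : f v = f w := by
  obtain ⟨u, hvu, hmax⟩ :=
    exists_isMaxOn_norm_of_tendsto_cofinite_zero hf₀ (s := {u | G.Reachable v u}) ⟨v, .rfl⟩
  have hcomponent : {x | G.Reachable u x} = {x | G.Reachable v x} :=
    Set.ext fun x => ⟨hvu.trans, hvu.symm.trans⟩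
  rw [← hcomponent] at hmax
  rw [hf.eq_of_reachable_of_isMaxOn hmax hvu.symm,
    hf.eq_of_reachable_of_isMaxOn hmax (hvu.symm.trans hvw)]

theorem isHarmonic_iff_forall_reachable (hf₀ : Tendsto f cofinite (nhds 0)) :
    G.IsHarmonic f ↔ ∀ v w, G.Reachable v w → f v = f w :=
  ⟨fun hf _ _ => hf.eq_of_reachable hf₀,
    fun hf => isHarmonic_of_forall_adj_eq fun v w hvw => (hf v w hvw.reachable).symm⟩

end SimpleGraph

section Laplacian

variable {X : Type*} (E : Set (X × X))

def lapGraph : SimpleGraph X :=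
  SimpleGraph.fromRel fun a b => (a, b) ∈ E

theorem lapNbr_eq_neighborSet (x : X) : lapNbr E x = (lapGraph E).neighborSet x := by
  ext y
  simp only [lapNbr, lapGraph, Set.mem_ofPred_eq, SimpleGraph.mem_neighborSet,
    SimpleGraph.fromRel_adj, ne_comm (a := x)]
  tauto

theorem lapNbr_subset (x : X) : lapNbr E x ⊆ {y | (x, y) ∈ E ∪ relInv E} :=
  fun _ hy => hy.1

theorem reachable_lapGraph :
    (lapGraph E).Reachable = Relation.ReflTransGen fun a b => (a, b) ∈ E ∨ (b, a) ∈ E :=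
  SimpleGraph.reachable_fromRel_eq_reflTransGen _

theorem forall_lapApply_eq_zero_iff_isHarmonic [(lapGraph E).LocallyFinite] (f : X → ℂ) :
    (∀ x, lapApply E f x = 0) ↔ (lapGraph E).IsHarmonic f := by
  refine forall_congr' fun x => ?_
  rw [lapApply, lapNbr_eq_neighborSet, finsum_mem_eq_toFinset_sum, Set.ncard_eq_toFinset_card',
    ← SimpleGraph.neighborFinset_def, SimpleGraph.card_neighborFinset_eq_degree, sub_eq_zero,
    nsmul_eq_mul]

end Laplacian

theorem stmt_7_general {X : Type*} (E : Set (X × X)) (M : ℕ)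
    (hbg : ∀ x : X, ({y | (x, y) ∈ E ∪ relInv E}).Finite ∧
      ({y | (x, y) ∈ E ∪ relInv E}).ncard ≤ M)
    (ξ : lp (fun _ : X => ℂ) 2) :
    (∀ x : X, lapApply E (fun z => ξ z) x = 0) ↔
      (∀ x y : X,
        Relation.ReflTransGen (fun a b => (a, b) ∈ E ∨ (b, a) ∈ E) x y → ξ x = ξ y) := by
  have : (lapGraph E).LocallyFinite := fun x => Set.Finite.fintype <| by
    rw [← lapNbr_eq_neighborSet]
    exact (hbg x).1.subset (lapNbr_subset E x)
  rw [forall_lapApply_eq_zero_iff_isHarmonic,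
    SimpleGraph.isHarmonic_iff_forall_reachable
      ((lp.memℓp ξ).tendsto_cofinite_zero (by norm_num)),
    reachable_lapGraph]

/-- For `E ⊆ X × X` of bounded geometry on a countable set `X` and
`ξ ∈ ℓ²(X; ℂ)`, one has `Δ^E ξ = 0` if and only if `ξ` is constant on each equivalence
class of the equivalence relation generated by `E` (i.e. points joined by a finite chain
of pairs in `E ∪ E⁻¹`). -/
theorem stmt_7 {X : Type*} [Countable X] (E : Set (X × X)) (M : ℕ)
    (hbg : ∀ x : X, ({y | (x, y) ∈ E ∪ relInv E}).Finite ∧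
      ({y | (x, y) ∈ E ∪ relInv E}).ncard ≤ M)
    (ξ : lp (fun _ : X => ℂ) 2) :
    (∀ x : X, lapApply E (fun z => ξ z) x = 0) ↔
      (∀ x y : X,
        Relation.ReflTransGen (fun a b => (a, b) ∈ E ∨ (b, a) ∈ E) x y → ξ x = ξ y) :=
  stmt_7_general E M hbg ξ
end

section
/- Let X be an infinite countable metric space (all distances finite) with bounded geometry, and let R > 0 be such that for every r < ∞ there exists n ∈ ℕ such that any two points x, y ∈ X with d(x,y) ≤ r are joined by a chain x = x₀, x₁, …, x_k = y with k ≤ n and d(x_{i−1}, x_i) ≤ R for each i. Let E = {(x,y) ∈ X × X : x ≠ y and d(x,y) ≤ R}, and let Δ be the bounded linear operator on ℓ²(X; ℂ) given by (Δξ)(x) = |{y : (x,y) ∈ E}|·ξ(x) − Σ_{y : (x,y) ∈ E} ξ(y). If X is amenable, then 0 belongs to the spectrum of Δ and 0 is not an isolated point of the spectrum of Δ (i.e. 0 lies in the closure of the spectrum of Δ with 0 removed). -/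
/-!
Let `G` be the graph on `X` joining distinct points at distance at most `R`. Bounded geometry
bounds its degrees by some `M`, the chain condition makes it connected, and `Δ` is its graph
Laplacian, so `2⟪Δξ, ξ⟫` is the Dirichlet energy `∑ |ξ y - ξ x|²` over oriented edges and
`‖Δξ‖² ≤ M · energy`. Labelling the neighbours of each vertex by `Fin M` sorts the oriented edges
into `M²` classes, each the graph of a partial translation of displacement at most `R`, so
amenability gives unit vectors of arbitrarily small energy: `Δ` is not bounded below and
`0 ∈ σ(Δ)`. A vector of zero energy is constant on the connected graph `G`, hence zero in
`ℓ²(X)` because `X` is infinite, so `Δ` is injective. If `0` were isolated in `σ(Δ)`, the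
continuous functional calculus applied to the indicator of `{0}` would give a nonzero `P` with
`ΔP = 0`, contradicting injectivity.
-/

/-- A partial translation of a metric space `X`: a bijection `t : A → B` between subsets
of `X` with `sup_{x ∈ A} d(t x, x) < ∞`. -/
def IsMetricPartialTranslation {X : Type*} [MetricSpace X] (t : X → X) (A B : Set X) :
    Prop :=
  Set.BijOn t A B ∧ ∃ C : ℝ, ∀ x ∈ A, dist (t x) x ≤ C

/-- `X` is amenable: for each `ε > 0` and finite family of partial translations there is
a unit vector in `ℓ²(X; ℂ)` that is `ε`-almost invariant. -/
def IsAmenableMetricSpace (X : Type*) [MetricSpace X] : Prop :=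
  ∀ ε : ℝ, 0 < ε → ∀ (m : ℕ) (t : Fin m → X → X) (A B : Fin m → Set X),
    (∀ i, IsMetricPartialTranslation (t i) (A i) (B i)) →
    ∃ ξ : lp (fun _ : X => ℂ) 2, ‖ξ‖ = 1 ∧
      ∀ i, (∑' x : (A i), ‖ξ (t i x) - ξ (x : X)‖ ^ 2) < ε

theorem continuousOn_ite_eq_of_notMem_closure {α β : Type*} [TopologicalSpace α] [T1Space α]
    [TopologicalSpace β] [DecidableEq α] {S : Set α} {a : α} (ha : a ∉ closure (S \ {a}))
    (b c : β) : ContinuousOn (fun z => if z = a then b else c) S := by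
  intro z _
  by_cases hz : z = a
  · subst hz
    refine continuousWithinAt_const.congr_of_eventuallyEq ?_ (if_pos rfl)
    filter_upwards [mem_nhdsWithin_of_mem_nhds (isClosed_closure.isOpen_compl.mem_nhds ha),
      self_mem_nhdsWithin] with w hw hwS
    exact if_pos (not_not.1 fun hwz => hw (subset_closure ⟨hwS, hwz⟩))
  · refine continuousWithinAt_const.congr_of_eventuallyEq ?_ (if_neg hz)
    filter_upwards [mem_nhdsWithin_of_mem_nhds (isOpen_ne.mem_nhds hz)] with w hw
    exact if_neg hw

theorem exists_ne_zero_mul_eq_zero_of_isolated {A : Type*} [CStarAlgebra A] {a : A}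
    [IsStarNormal a] (h0 : (0 : ℂ) ∈ spectrum ℂ a)
    (hiso : (0 : ℂ) ∉ closure (spectrum ℂ a \ {0})) : ∃ p : A, p ≠ 0 ∧ a * p = 0 := by
  have : Nontrivial A := by
    by_contra h
    rw [not_nontrivial_iff_subsingleton] at h
    simp [spectrum.of_subsingleton] at h0
  set f : ℂ → ℂ := fun z => if z = 0 then 1 else 0
  have hf : ContinuousOn f (spectrum ℂ a) := continuousOn_ite_eq_of_notMem_closure hiso 1 0
  refine ⟨cfc f a, fun hp => ?_, ?_⟩
  · have h1 : (1 : ℂ) ∈ spectrum ℂ (cfc f a) := by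
      rw [cfc_map_spectrum f a]
      exact ⟨0, h0, by simp [f]⟩
    simp [hp] at h1
  · have hmul := cfc_mul (fun z => z) f a
    rw [cfc_id' ℂ a] at hmul
    rw [← hmul]
    convert cfc_zero ℂ a using 2
    ext z
    by_cases hz : z = 0 <;> simp [f, hz]

namespace ContinuousLinearMap

variable {E : Type*}

theorem zero_mem_closure_spectrum_diff_of_injective [NormedAddCommGroup E]
    [InnerProductSpace ℂ E] [CompleteSpace E] {T : E →L[ℂ] E} [IsStarNormal T]
    (h0 : (0 : ℂ) ∈ spectrum ℂ T) (hT : Function.Injective T) :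
    (0 : ℂ) ∈ closure (spectrum ℂ T \ {0}) := by
  by_contra hiso
  obtain ⟨P, hP, hTP⟩ := exists_ne_zero_mul_eq_zero_of_isolated h0 hiso
  obtain ⟨η, hη⟩ : ∃ η, P η ≠ 0 := by
    by_contra! h
    exact hP (ext h)
  exact hη (hT (by simpa using congr($hTP η)))

theorem zero_mem_spectrum_of_forall_exists_norm_apply_lt {𝕜 : Type*} [NontriviallyNormedField 𝕜]
    [NormedAddCommGroup E] [NormedSpace 𝕜 E] {T : E →L[𝕜] E}
    (h : ∀ ε > 0, ∃ ξ : E, ‖ξ‖ = 1 ∧ ‖T ξ‖ < ε) : (0 : 𝕜) ∈ spectrum 𝕜 T := by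
  rw [spectrum.zero_mem_iff]
  rintro ⟨u, rfl⟩
  set C := ‖(↑u⁻¹ : E →L[𝕜] E)‖
  obtain ⟨ξ, hξ, huξ⟩ := h (1 / (C + 1)) (by positivity)
  have hinv : ξ = (↑u⁻¹ : E →L[𝕜] E) ((u : E →L[𝕜] E) ξ) := by
    rw [← mul_apply_eq_comp, Units.inv_mul, one_apply_eq_self]
  have : 1 ≤ C * (1 / (C + 1)) := by
    calc 1 = ‖ξ‖ := hξ.symm
      _ = ‖(↑u⁻¹ : E →L[𝕜] E) ((u : E →L[𝕜] E) ξ)‖ := by rw [← hinv]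
      _ ≤ C * ‖(u : E →L[𝕜] E) ξ‖ := le_opNorm _ _
      _ ≤ C * (1 / (C + 1)) := by gcongr
  rw [mul_one_div, le_div_iff₀ (by positivity)] at this
  linarith

end ContinuousLinearMap

open ComplexConjugate InnerProductSpace

local notation "ℓ²(" V ")" => lp (fun _ : V => ℂ) 2

theorem lp.hasSum_norm_sq {V : Type*} (ξ : ℓ²(V)) : HasSum (fun x => ‖ξ x‖ ^ 2) (‖ξ‖ ^ 2) := by
  simpa using lp.hasSum_norm (p := 2) (by norm_num) ξ

theorem lp.eq_zero_of_forall_apply_eq {V : Type*} [Infinite V] {ξ : ℓ²(V)}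
    (h : ∀ x y, ξ x = ξ y) : ξ = 0 := by
  ext x
  have hsum := (lp.hasSum_norm_sq ξ).summable
  simp_rw [h _ x, summable_const_iff, pow_eq_zero_iff two_ne_zero, norm_eq_zero] at hsum
  simpa using hsum

namespace SimpleGraph

variable {V : Type*}

theorem Reachable.apply_eq {G : SimpleGraph V} {α : Type*} {f : V → α}
    (hf : ∀ x y, G.Adj x y → f x = f y) {u v : V} (h : G.Reachable u v) : f u = f v := by
  obtain ⟨p⟩ := h
  induction p with
  | nil => rfl
  | cons ha _ ih => exact (hf _ _ ha).trans ih

variable (G : SimpleGraph V)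

def dartEquivSigma : G.Dart ≃ Σ x, G.neighborSet x where
  toFun d := ⟨d.fst, d.snd, d.adj⟩
  invFun p := G.dartOfNeighborSet p.1 p.2
  left_inv _ := rfl
  right_inv _ := rfl

noncomputable def dirichletEnergy (ξ : ℓ²(V)) : ℝ := ∑' d : G.Dart, ‖ξ d.snd - ξ d.fst‖ ^ 2

def IsLaplacian [G.LocallyFinite] (Δ : ℓ²(V) →L[ℂ] ℓ²(V)) : Prop :=
  ∀ ξ x, Δ ξ x = ∑ y ∈ G.neighborFinset x, (ξ x - ξ y)

variable {G}

section LocallyFinite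

variable [G.LocallyFinite]

theorem hasSum_sum_neighborFinset {E : Type*} [AddCommGroup E] [TopologicalSpace E]
    [IsTopologicalAddGroup E] [RegularSpace E] {g : V → V → E} {a : E}
    (h : HasSum (fun d : G.Dart => g d.fst d.snd) a) :
    HasSum (fun x => ∑ y ∈ G.neighborFinset x, g x y) a := by
  refine (G.dartEquivSigma.symm.hasSum_iff.2 h).sigma fun x => ?_
  rw [Finset.sum_subtype _ fun y => G.mem_neighborFinset x y]
  exact hasSum_fintype _

variable {M : ℕ}

theorem summable_dart_fst (hdeg : ∀ x, G.degree x ≤ M) {f : V → ℝ} (hf0 : ∀ x, 0 ≤ f x)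
    (hf : Summable f) : Summable (fun d : G.Dart => f d.fst) := by
  rw [← G.dartEquivSigma.symm.summable_iff]
  refine (summable_sigma_of_nonneg fun _ => hf0 _).2 ⟨fun _ => .of_finite, ?_⟩
  refine (hf.mul_left (M : ℝ)).of_nonneg_of_le (fun x => tsum_nonneg fun _ => hf0 x) fun x => ?_
  change ∑' _ : G.neighborSet x, f x ≤ M * f x
  rw [tsum_fintype, Finset.sum_const, Finset.card_univ, card_neighborSet_eq_degree, nsmul_eq_mul]
  exact mul_le_mul_of_nonneg_right (by exact_mod_cast hdeg x) (hf0 x)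

theorem summable_dart_snd (hdeg : ∀ x, G.degree x ≤ M) {f : V → ℝ} (hf0 : ∀ x, 0 ≤ f x)
    (hf : Summable f) : Summable (fun d : G.Dart => f d.snd) := by
  rw [← (Dart.symm_involutive.toPerm _).summable_iff]
  exact summable_dart_fst hdeg hf0 hf

theorem summable_dirichletEnergy (hdeg : ∀ x, G.degree x ≤ M) (ξ : ℓ²(V)) :
    Summable (fun d : G.Dart => ‖ξ d.snd - ξ d.fst‖ ^ 2) := by
  have hsq := (lp.hasSum_norm_sq ξ).summable
  refine (((summable_dart_snd hdeg (fun _ => sq_nonneg _) hsq).add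
    (summable_dart_fst hdeg (fun _ => sq_nonneg _) hsq)).mul_left 2).of_nonneg_of_le
    (fun _ => sq_nonneg _) fun d => ?_
  have := norm_sub_le (ξ d.snd) (ξ d.fst)
  nlinarith [norm_nonneg (ξ d.snd - ξ d.fst), sq_nonneg (‖ξ d.snd‖ - ‖ξ d.fst‖)]

theorem IsLaplacian.inner_apply_self {Δ : ℓ²(V) →L[ℂ] ℓ²(V)} (hΔ : G.IsLaplacian Δ)
    (hdeg : ∀ x, G.degree x ≤ M) (ξ : ℓ²(V)) :
    ⟪Δ ξ, ξ⟫_ℂ = ((G.dirichletEnergy ξ / 2 : ℝ) : ℂ) := by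
  set u : G.Dart → ℂ := fun d => conj (ξ d.fst - ξ d.snd) * ξ d.fst
  have hu : Summable u := by
    refine Summable.of_norm_bounded ((summable_dirichletEnergy hdeg ξ).add
      (summable_dart_fst hdeg (fun _ => sq_nonneg _) (lp.hasSum_norm_sq ξ).summable)) fun d => ?_
    rw [norm_mul, RCLike.norm_conj, norm_sub_rev]
    nlinarith [norm_nonneg (ξ d.snd - ξ d.fst), norm_nonneg (ξ d.fst),
      sq_nonneg (‖ξ d.snd - ξ d.fst‖ - ‖ξ d.fst‖)]
  have hinner : ⟪Δ ξ, ξ⟫_ℂ = ∑' d, u d := by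
    rw [lp.inner_eq_tsum, ← (hasSum_sum_neighborFinset (g := fun x y => conj (ξ x - ξ y) * ξ x)
      hu.hasSum).tsum_eq]
    refine tsum_congr fun x => ?_
    rw [hΔ, RCLike.inner_apply, map_sum, Finset.mul_sum]
    exact Finset.sum_congr rfl fun _ _ => mul_comm _ _
  -- reversing a dart turns `conj (a - b) * a` into `conj (b - a) * b`; together they give `|a - b|²`
  have hpair (a b : ℂ) : conj (a - b) * a + conj (b - a) * b = ((‖b - a‖ ^ 2 : ℝ) : ℂ) := by
    rw [norm_sub_rev, Complex.ofReal_pow, ← Complex.conj_mul', map_sub, map_sub]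
    ring
  have hsymm : ∑' d : G.Dart, u d.symm = ∑' d, u d := (Dart.symm_involutive.toPerm _).tsum_eq u
  have hu' : Summable fun d : G.Dart => u d.symm :=
    (Dart.symm_involutive.toPerm _).summable_iff.2 hu
  have htwo : 2 * ⟪Δ ξ, ξ⟫_ℂ = (G.dirichletEnergy ξ : ℂ) := by
    calc 2 * ⟪Δ ξ, ξ⟫_ℂ = ∑' d, u d + ∑' d : G.Dart, u d.symm := by
          rw [two_mul, hinner, hsymm]
      _ = ∑' d : G.Dart, ((‖ξ d.snd - ξ d.fst‖ ^ 2 : ℝ) : ℂ) := by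
          rw [← hu.tsum_add hu']
          exact tsum_congr fun d => hpair _ _
      _ = (G.dirichletEnergy ξ : ℂ) := (Complex.ofReal_tsum _).symm
  push_cast
  linear_combination htwo / 2

theorem IsLaplacian.isSelfAdjoint {Δ : ℓ²(V) →L[ℂ] ℓ²(V)} (hΔ : G.IsLaplacian Δ)
    (hdeg : ∀ x, G.degree x ≤ M) : IsSelfAdjoint Δ := by
  rw [ContinuousLinearMap.isSelfAdjoint_iff_isSymmetric,
    LinearMap.isSymmetric_iff_inner_map_self_real]
  intro ξ
  simp only [ContinuousLinearMap.coe_coe, hΔ.inner_apply_self hdeg, Complex.conj_ofReal]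

theorem IsLaplacian.norm_apply_sq_le {Δ : ℓ²(V) →L[ℂ] ℓ²(V)} (hΔ : G.IsLaplacian Δ)
    (hdeg : ∀ x, G.degree x ≤ M) (ξ : ℓ²(V)) : ‖Δ ξ‖ ^ 2 ≤ M * G.dirichletEnergy ξ := by
  have hE := hasSum_sum_neighborFinset (g := fun x y => ‖ξ y - ξ x‖ ^ 2)
    (summable_dirichletEnergy hdeg ξ).hasSum
  refine hasSum_le (fun x => ?_) (lp.hasSum_norm_sq (Δ ξ)) (hE.mul_left (M : ℝ))
  rw [hΔ]
  calc ‖∑ y ∈ G.neighborFinset x, (ξ x - ξ y)‖ ^ 2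
      ≤ (∑ y ∈ G.neighborFinset x, ‖ξ x - ξ y‖) ^ 2 := by gcongr; exact norm_sum_le _ _
    _ ≤ (G.neighborFinset x).card * ∑ y ∈ G.neighborFinset x, ‖ξ x - ξ y‖ ^ 2 :=
        sq_sum_le_card_mul_sum_sq
    _ ≤ M * ∑ y ∈ G.neighborFinset x, ‖ξ y - ξ x‖ ^ 2 := by
        simp_rw [card_neighborFinset_eq_degree, norm_sub_rev (ξ x)]
        gcongr
        exact_mod_cast hdeg x

theorem apply_eq_of_dirichletEnergy_eq_zero (hdeg : ∀ x, G.degree x ≤ M) {ξ : ℓ²(V)}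
    (h : G.dirichletEnergy ξ = 0) {x y : V} (hxy : G.Adj x y) : ξ x = ξ y := by
  have hsum : HasSum _ (G.dirichletEnergy ξ) := (summable_dirichletEnergy hdeg ξ).hasSum
  rw [h] at hsum
  have hzero := (hasSum_zero_iff_of_nonneg fun _ => sq_nonneg _).1 hsum
  have := congrFun hzero ⟨(x, y), hxy⟩
  simp only [Pi.zero_apply, pow_eq_zero_iff two_ne_zero, norm_eq_zero, sub_eq_zero] at this
  exact this.symm

theorem IsLaplacian.injective [Infinite V] {Δ : ℓ²(V) →L[ℂ] ℓ²(V)} (hΔ : G.IsLaplacian Δ)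
    (hdeg : ∀ x, G.degree x ≤ M) (hG : G.Preconnected) : Function.Injective Δ := by
  refine (injective_iff_map_eq_zero Δ).2 fun ζ hζ => ?_
  have hE : G.dirichletEnergy ζ = 0 := by
    have := hΔ.inner_apply_self hdeg ζ
    rw [hζ, inner_zero_left] at this
    have : G.dirichletEnergy ζ / 2 = 0 := by exact_mod_cast this.symm
    linarith
  exact lp.eq_zero_of_forall_apply_eq fun x y =>
    (hG x y).apply_eq fun _ _ => apply_eq_of_dirichletEnergy_eq_zero hdeg hE

theorem IsLaplacian.zero_mem_spectrum {Δ : ℓ²(V) →L[ℂ] ℓ²(V)} (hΔ : G.IsLaplacian Δ)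
    (hdeg : ∀ x, G.degree x ≤ M)
    (h : ∀ ε > 0, ∃ ξ : ℓ²(V), ‖ξ‖ = 1 ∧ G.dirichletEnergy ξ < ε) :
    (0 : ℂ) ∈ spectrum ℂ Δ := by
  refine ContinuousLinearMap.zero_mem_spectrum_of_forall_exists_norm_apply_lt fun ε hε => ?_
  obtain ⟨ξ, hξ, hE⟩ := h (ε ^ 2 / (M + 1)) (by positivity)
  refine ⟨ξ, hξ, (pow_lt_pow_iff_left₀ (norm_nonneg _) hε.le two_ne_zero).1 ?_⟩
  calc ‖Δ ξ‖ ^ 2 ≤ M * G.dirichletEnergy ξ := hΔ.norm_apply_sq_le hdeg ξ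
    _ ≤ M * (ε ^ 2 / (M + 1)) := by gcongr
    _ < ε ^ 2 := by
        rw [mul_div_assoc', div_lt_iff₀ (by positivity)]
        nlinarith [sq_pos_of_pos hε]

theorem exists_dart_label (hdeg : ∀ x, G.degree x ≤ M) :
    ∃ lab : G.Dart → Fin M, ∀ d d' : G.Dart, d.fst = d'.fst → lab d = lab d' → d = d' := by
  have emb : ∀ x, G.neighborSet x ↪ Fin M := fun x =>
    (Function.Embedding.nonempty_of_card_le <| by
      rw [Fintype.card_fin, card_neighborSet_eq_degree]; exact hdeg x).some
  refine ⟨fun d => emb d.fst ⟨d.snd, d.adj⟩, ?_⟩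
  rintro ⟨⟨x, y⟩, hxy⟩ ⟨⟨x', y'⟩, hxy'⟩ (rfl : x = x') h
  obtain rfl : y = y' := congrArg Subtype.val ((emb x).injective h)
  rfl

theorem exists_dart_coloring (hdeg : ∀ x, G.degree x ≤ M) :
    ∃ c : G.Dart → Fin M × Fin M,
      ∀ i, (c ⁻¹' {i}).InjOn (·.fst) ∧ (c ⁻¹' {i}).InjOn (·.snd) := by
  obtain ⟨lab, hlab⟩ := exists_dart_label hdeg
  refine ⟨fun d : G.Dart => (lab d, lab d.symm), fun i => ⟨?_, ?_⟩⟩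
  · intro d (hd : _ = i) d' (hd' : _ = i) h
    exact hlab d d' h (congrArg Prod.fst (hd.trans hd'.symm))
  · intro d (hd : _ = i) d' (hd' : _ = i) h
    exact Dart.symm_involutive.injective
      (hlab _ _ h (congrArg Prod.snd (hd.trans hd'.symm)))

end LocallyFinite

variable (G) in
noncomputable def dartTranslation (S : Set G.Dart) : V → V :=
  Function.extend (fun d : S => d.1.fst) (fun d => d.1.snd) id

theorem dartTranslation_fst {S : Set G.Dart} (hS : S.InjOn (·.fst)) {d : G.Dart} (hd : d ∈ S) :
    G.dartTranslation S d.fst = d.snd :=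
  hS.injective.extend_apply (fun d : S => d.1.snd) id ⟨d, hd⟩

theorem tsum_dartTranslation {S : Set G.Dart} (hS : S.InjOn (·.fst)) (ξ : V → ℂ) :
    ∑' x : (·.fst) '' S, ‖ξ (G.dartTranslation S x) - ξ x‖ ^ 2 =
      ∑' d : S, ‖ξ d.1.snd - ξ d.1.fst‖ ^ 2 := by
  rw [← (Equiv.Set.imageOfInjOn (·.fst) S hS).tsum_eq]
  exact tsum_congr fun d => by simp [Equiv.Set.imageOfInjOn, dartTranslation_fst hS d.2]

end SimpleGraph

theorem isMetricPartialTranslation_dartTranslation {X : Type*} [MetricSpace X]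
    {G : SimpleGraph X} {R : ℝ} (hR : ∀ x y, G.Adj x y → dist x y ≤ R) {S : Set G.Dart}
    (hfst : S.InjOn (·.fst)) (hsnd : S.InjOn (·.snd)) :
    IsMetricPartialTranslation (G.dartTranslation S) ((·.fst) '' S) ((·.snd) '' S) := by
  refine ⟨⟨?_, ?_, ?_⟩, R, ?_⟩
  · rintro _ ⟨d, hd, rfl⟩
    rw [SimpleGraph.dartTranslation_fst hfst hd]
    exact ⟨d, hd, rfl⟩
  · rintro _ ⟨d, hd, rfl⟩ _ ⟨d', hd', rfl⟩ h
    rw [SimpleGraph.dartTranslation_fst hfst hd, SimpleGraph.dartTranslation_fst hfst hd'] at h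
    rw [hsnd hd hd' h]
  · rintro _ ⟨d, hd, rfl⟩
    exact ⟨d.fst, ⟨d, hd, rfl⟩, SimpleGraph.dartTranslation_fst hfst hd⟩
  · rintro _ ⟨d, hd, rfl⟩
    rw [SimpleGraph.dartTranslation_fst hfst hd, dist_comm]
    exact hR _ _ d.adj

theorem IsAmenableMetricSpace.exists_forall_tsum_lt {X : Type*} [MetricSpace X]
    (hX : IsAmenableMetricSpace X) {ι : Type*} [Fintype ι] {t : ι → X → X} {A B : ι → Set X}
    (ht : ∀ i, IsMetricPartialTranslation (t i) (A i) (B i)) {ε : ℝ} (hε : 0 < ε) :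
    ∃ ξ : ℓ²(X), ‖ξ‖ = 1 ∧ ∀ i, ∑' x : A i, ‖ξ (t i x) - ξ x‖ ^ 2 < ε := by
  let e := (Fintype.equivFin ι).symm
  obtain ⟨ξ, hξ, hsmall⟩ := hX ε hε _ (t ∘ e) (A ∘ e) (B ∘ e) fun i => ht _
  refine ⟨ξ, hξ, fun i => ?_⟩
  obtain ⟨j, rfl⟩ := e.surjective i
  exact hsmall j

theorem IsAmenableMetricSpace.exists_dirichletEnergy_lt {X : Type*} [MetricSpace X]
    (hX : IsAmenableMetricSpace X) {G : SimpleGraph X} [G.LocallyFinite] {M : ℕ} {R : ℝ}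
    (hdeg : ∀ x, G.degree x ≤ M) (hR : ∀ x y, G.Adj x y → dist x y ≤ R) {ε : ℝ} (hε : 0 < ε) :
    ∃ ξ : ℓ²(X), ‖ξ‖ = 1 ∧ G.dirichletEnergy ξ < ε := by
  obtain ⟨c, hc⟩ := G.exists_dart_coloring hdeg
  set N := Fintype.card (Fin M × Fin M)
  obtain ⟨ξ, hξ, hsmall⟩ := hX.exists_forall_tsum_lt
    (fun i => isMetricPartialTranslation_dartTranslation hR (hc i).1 (hc i).2)
    (show 0 < ε / (N + 1) by positivity)
  refine ⟨ξ, hξ, ?_⟩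
  have hsplit : G.dirichletEnergy ξ = ∑ i, ∑' d : c ⁻¹' {i}, ‖ξ d.1.snd - ξ d.1.fst‖ ^ 2 :=
    ((G.summable_dirichletEnergy hdeg ξ).hasSum.tsum_fiberwise c).unique (hasSum_fintype _)
  calc G.dirichletEnergy ξ = ∑ i, ∑' d : c ⁻¹' {i}, ‖ξ d.1.snd - ξ d.1.fst‖ ^ 2 := hsplit
    _ ≤ ∑ _i : Fin M × Fin M, ε / (N + 1) := Finset.sum_le_sum fun i _ =>
        (SimpleGraph.tsum_dartTranslation (hc i).1 ξ ▸ hsmall i).le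
    _ < ε := by
        rw [Finset.sum_const, Finset.card_univ, nsmul_eq_mul, mul_div_assoc',
          div_lt_iff₀ (by positivity)]
        linarith

def ripsGraph (X : Type*) [PseudoMetricSpace X] (R : ℝ) : SimpleGraph X where
  Adj x y := x ≠ y ∧ dist x y ≤ R
  symm := ⟨fun _ _ h => ⟨h.1.symm, (dist_comm _ _).trans_le h.2⟩⟩
  loopless := ⟨fun _ h => h.1 rfl⟩

@[simp]
theorem ripsGraph_adj {X : Type*} [PseudoMetricSpace X] {R : ℝ} {x y : X} :
    (ripsGraph X R).Adj x y ↔ x ≠ y ∧ dist x y ≤ R :=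
  Iff.rfl

theorem ripsGraph_reachable_of_chain {X : Type*} [PseudoMetricSpace X] {R : ℝ} {c : ℕ → X}
    {k : ℕ} (hc : ∀ i < k, dist (c i) (c (i + 1)) ≤ R) : (ripsGraph X R).Reachable (c 0) (c k) := by
  induction k with
  | zero => rfl
  | succ k ih =>
    refine (ih fun i hi => hc i (by omega)).trans ?_
    by_cases h : c k = c (k + 1)
    · rw [h]
    · exact SimpleGraph.Adj.reachable (ripsGraph_adj.2 ⟨h, hc k (by omega)⟩)

theorem stmt_10_general {X : Type*} [MetricSpace X] [Infinite X]
    (hbg : ∀ r : ℝ, ∃ M : ℕ, ∀ x : X,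
      ({y | dist x y ≤ r}).Finite ∧ ({y | dist x y ≤ r}).ncard ≤ M)
    (R : ℝ)
    (hgen : ∀ r : ℝ, ∃ n : ℕ, ∀ x y : X, dist x y ≤ r →
      ∃ (k : ℕ) (c : ℕ → X), k ≤ n ∧ c 0 = x ∧ c k = y ∧
        ∀ i < k, dist (c i) (c (i + 1)) ≤ R)
    (E : Set (X × X)) (hE : E = {p : X × X | p.1 ≠ p.2 ∧ dist p.1 p.2 ≤ R})
    (Δ : lp (fun _ : X => ℂ) 2 →L[ℂ] lp (fun _ : X => ℂ) 2)
    (hΔ : ∀ (ξ : lp (fun _ : X => ℂ) 2) (x : X),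
      Δ ξ x = (({y | (x, y) ∈ E}).ncard : ℂ) * ξ x - ∑ᶠ y ∈ {y | (x, y) ∈ E}, ξ y)
    (hamen : IsAmenableMetricSpace X) :
    (0 : ℂ) ∈ spectrum ℂ Δ ∧ (0 : ℂ) ∈ closure (spectrum ℂ Δ \ {0}) := by
  obtain ⟨M, hM⟩ := hbg R
  let G := ripsGraph X R
  have hN : ∀ x, {y | (x, y) ∈ E} = G.neighborSet x := fun x => by subst hE; rfl
  have hball : ∀ x, G.neighborSet x ⊆ {y | dist x y ≤ R} := fun x _ hy => hy.2
  let : G.LocallyFinite := fun x => ((hM x).1.subset (hball x)).fintype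
  have hdeg : ∀ x, G.degree x ≤ M := fun x => by
    calc G.degree x = (G.neighborSet x).ncard := by
          rw [← SimpleGraph.coe_neighborFinset, Set.ncard_coe_finset,
            SimpleGraph.card_neighborFinset_eq_degree]
      _ ≤ M := (Set.ncard_le_ncard (hball x) (hM x).1).trans (hM x).2
  have hlap : G.IsLaplacian Δ := fun ξ x => by
    rw [hΔ, hN, ← SimpleGraph.coe_neighborFinset, Set.ncard_coe_finset, finsum_mem_coe_finset,
      Finset.sum_sub_distrib, Finset.sum_const, nsmul_eq_mul]
  have hconn : G.Preconnected := fun x y => by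
    obtain ⟨n, hn⟩ := hgen (dist x y)
    obtain ⟨k, c, -, rfl, rfl, hc⟩ := hn x y le_rfl
    exact ripsGraph_reachable_of_chain hc
  have h0 := hlap.zero_mem_spectrum hdeg fun ε hε =>
    hamen.exists_dirichletEnergy_lt hdeg (fun _ _ h => h.2) hε
  have := (hlap.isSelfAdjoint hdeg).isStarNormal
  exact ⟨h0, ContinuousLinearMap.zero_mem_closure_spectrum_diff_of_injective h0
    (hlap.injective hdeg hconn)⟩

/-- For an infinite countable metric space `X` with bounded geometry
and generating scale `R`, if `X` is amenable then `0` lies in the spectrum of the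
Laplacian `Δ` at scale `R` and is not an isolated point of that spectrum. -/
theorem stmt_10 {X : Type*} [MetricSpace X] [Countable X] [Infinite X]
    (hbg : ∀ r : ℝ, ∃ M : ℕ, ∀ x : X,
      ({y | dist x y ≤ r}).Finite ∧ ({y | dist x y ≤ r}).ncard ≤ M)
    (R : ℝ) (hR0 : 0 < R)
    (hgen : ∀ r : ℝ, ∃ n : ℕ, ∀ x y : X, dist x y ≤ r →
      ∃ (k : ℕ) (c : ℕ → X), k ≤ n ∧ c 0 = x ∧ c k = y ∧
        ∀ i < k, dist (c i) (c (i + 1)) ≤ R)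
    (E : Set (X × X)) (hE : E = {p : X × X | p.1 ≠ p.2 ∧ dist p.1 p.2 ≤ R})
    (Δ : lp (fun _ : X => ℂ) 2 →L[ℂ] lp (fun _ : X => ℂ) 2)
    (hΔ : ∀ (ξ : lp (fun _ : X => ℂ) 2) (x : X),
      Δ ξ x = (({y | (x, y) ∈ E}).ncard : ℂ) * ξ x - ∑ᶠ y ∈ {y | (x, y) ∈ E}, ξ y)
    (hamen : IsAmenableMetricSpace X) :
    (0 : ℂ) ∈ spectrum ℂ Δ ∧ (0 : ℂ) ∈ closure (spectrum ℂ Δ \ {0}) :=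
  stmt_10_general hbg R hgen E hE Δ hΔ hamen
end

section
/- For each n ∈ ℕ let X_n be a nonempty finite set and let E_n ⊆ X_n × X_n be a symmetric relation that contains the diagonal {(x,x) : x ∈ X_n} and is connected (for all x, y ∈ X_n there is k with (x,y) ∈ E_n^{∘k}). Assume |X_n| → ∞ as n → ∞, and assume the uniform bound: there is K ∈ ℕ such that for all n and all x ∈ X_n, |{y ∈ X_n : (x,y) ∈ E_n}| ≤ K. Then for every r ≥ 1 there exist s, N ∈ ℕ such that for every n ≥ N there is a bijection σ_n : X_n → X_n with (x, σ_n(x)) ∈ E_n^{∘s} and (x, σ_n(x)) ∉ E_n^{∘r} for every x ∈ X_n. -/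
section Aux

variable {V : Type*} {E : Set (V × V)}

lemma mem_relPow_succ {k : ℕ} {x y : V} :
    (x, y) ∈ relPow E (k + 1) ↔ ∃ z, (x, z) ∈ E ∧ (z, y) ∈ relPow E k := Iff.rfl

lemma mem_relPow_zero {x y : V} : (x, y) ∈ relPow E 0 ↔ x = y := Iff.rfl

lemma relPow_mono (hdiag : ∀ x : V, (x, x) ∈ E) {j k : ℕ} (h : j ≤ k) :
    relPow E j ⊆ relPow E k := by
  induction k with
  | zero =>
    have : j = 0 := Nat.le_zero.mp h
    subst this; exact fun p hp => hp
  | succ k ih =>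
    rcases Nat.lt_or_ge j (k + 1) with h' | h'
    · intro p hp
      exact ⟨p.1, hdiag p.1, ih (Nat.lt_succ_iff.mp h') hp⟩
    · have : j = k + 1 := le_antisymm h h'
      subst this; exact fun p hp => hp

lemma relPow_succ_right {k : ℕ} {x y : V} :
    (x, y) ∈ relPow E (k + 1) ↔ ∃ z, (x, z) ∈ relPow E k ∧ (z, y) ∈ E := by
  induction k generalizing x with
  | zero =>
    constructor
    · rintro ⟨z, hxz, (hz : z = y)⟩
      exact ⟨x, rfl, hz ▸ hxz⟩
    · rintro ⟨z, (hz : x = z), hzy⟩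
      exact ⟨y, hz ▸ hzy, rfl⟩
  | succ k ih =>
    constructor
    · rintro ⟨a, hxa, hay⟩
      obtain ⟨z, haz, hzy⟩ := ih.mp hay
      exact ⟨z, ⟨a, hxa, haz⟩, hzy⟩
    · rintro ⟨z, ⟨a, hxa, haz⟩, hzy⟩
      exact ⟨a, hxa, ih.mpr ⟨z, haz, hzy⟩⟩

lemma relPow_trans {i j : ℕ} {x y z : V}
    (h1 : (x, y) ∈ relPow E i) (h2 : (y, z) ∈ relPow E j) :
    (x, z) ∈ relPow E (i + j) := by
  induction i generalizing x with
  | zero =>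
    have : x = y := h1
    subst this
    simpa using h2
  | succ i ih =>
    obtain ⟨a, hxa, hay⟩ := h1
    rw [Nat.succ_add]
    exact ⟨a, hxa, ih hay⟩

lemma relPow_symm (hsymm : ∀ p ∈ E, (p.2, p.1) ∈ E) {k : ℕ} {x y : V}
    (h : (x, y) ∈ relPow E k) : (y, x) ∈ relPow E k := by
  induction k generalizing x y with
  | zero => exact (h : x = y).symm
  | succ k ih =>
    obtain ⟨z, hxz, hzy⟩ := h
    exact relPow_succ_right.mpr ⟨z, ih hzy, hsymm (x, z) hxz⟩

end Aux

section Ball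

variable {V : Type*} [Fintype V]

/-- The ball of radius `k` around `x` in the graph given by `E`. -/
noncomputable def gball (E : Set (V × V)) (k : ℕ) (x : V) : Finset V :=
  @Finset.filter V (fun y => (x, y) ∈ relPow E k) (Classical.decPred _) Finset.univ

lemma mem_gball {E : Set (V × V)} {k : ℕ} {x y : V} : y ∈ gball E k x ↔ (x, y) ∈ relPow E k := by
  simp [gball]

lemma card_gball_le {E : Set (V × V)} {K : ℕ} (hdeg : ∀ x : V, ({y | (x, y) ∈ E}).ncard ≤ K) (k : ℕ) (x : V) :
    (gball E k x).card ≤ K ^ k := by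
  classical
  induction k generalizing x with
  | zero =>
    have : gball E 0 x ⊆ {x} := by
      intro y hy
      have : x = y := mem_gball.mp hy
      simp [this.symm]
    simpa using Finset.card_le_card this
  | succ k ih =>
    have hnb : ∀ z : V, (Finset.univ.filter fun y => (z, y) ∈ E).card ≤ K := by
      intro z
      have h1 : ({y | (z, y) ∈ E}).ncard = ({y | (z, y) ∈ E}).toFinset.card :=
        Set.ncard_eq_toFinset_card' _
      have h2 : ({y | (z, y) ∈ E}).toFinset = Finset.univ.filter fun y => (z, y) ∈ E := by
        ext y; simp
      have := hdeg z
      rw [h1, h2] at this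
      exact this
    have hsub : gball E (k + 1) x ⊆
        (Finset.univ.filter fun z => (x, z) ∈ E).biUnion (fun z => gball E k z) := by
      intro y hy
      obtain ⟨z, hxz, hzy⟩ := mem_gball.mp hy
      exact Finset.mem_biUnion.mpr ⟨z, by simp [hxz], mem_gball.mpr hzy⟩
    calc (gball E (k + 1) x).card
        ≤ ((Finset.univ.filter fun z => (x, z) ∈ E).biUnion (fun z => gball E k z)).card :=
          Finset.card_le_card hsub
      _ ≤ ∑ z ∈ (Finset.univ.filter fun z => (x, z) ∈ E), (gball E k z).card :=
          Finset.card_biUnion_le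
      _ ≤ ∑ _z ∈ (Finset.univ.filter fun z => (x, z) ∈ E), K ^ k :=
          Finset.sum_le_sum fun z _ => ih z
      _ = (Finset.univ.filter fun z => (x, z) ∈ E).card * K ^ k := by
          rw [Finset.sum_const, smul_eq_mul]
      _ ≤ K * K ^ k := Nat.mul_le_mul_right _ (hnb x)
      _ = K ^ (k + 1) := by ring

lemma card_gball_ge {E : Set (V × V)} (hdiag : ∀ x : V, (x, x) ∈ E)
    (hconn : ∀ x y : V, ∃ k : ℕ, (x, y) ∈ relPow E k) (k : ℕ) (x : V) :
    min (Fintype.card V) (k + 1) ≤ (gball E k x).card := by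
  classical
  induction k with
  | zero =>
    have : x ∈ gball E 0 x := mem_gball.mpr rfl
    have h1 : 1 ≤ (gball E 0 x).card := Finset.card_pos.mpr ⟨x, this⟩
    omega
  | succ k ih =>
    by_cases hu : gball E k x = Finset.univ
    · have : gball E (k + 1) x = Finset.univ := by
        apply Finset.eq_univ_of_forall
        intro y
        have : y ∈ gball E k x := hu ▸ Finset.mem_univ y
        exact mem_gball.mpr (relPow_mono hdiag (Nat.le_succ k) (mem_gball.mp this))
      rw [this, Finset.card_univ]
      exact min_le_left _ _
    · -- strict growth
      have hstrict : gball E k x ⊂ gball E (k + 1) x := by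
        refine ⟨fun y hy => mem_gball.mpr (relPow_mono hdiag (Nat.le_succ k) (mem_gball.mp hy)), ?_⟩
        intro hsup
        -- then all balls stabilize
        have hstab : ∀ j, gball E (k + j) x ⊆ gball E k x := by
          intro j
          induction j with
          | zero => exact fun y hy => hy
          | succ j ihj =>
            intro y hy
            obtain ⟨z, hxz, hzy⟩ := relPow_succ_right.mp (mem_gball.mp hy)
            have hz : z ∈ gball E k x := ihj (mem_gball.mpr hxz)
            have : y ∈ gball E (k + 1) x :=
              mem_gball.mpr (relPow_succ_right.mpr ⟨z, mem_gball.mp hz, hzy⟩)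
            exact hsup this
        apply hu
        apply Finset.eq_univ_of_forall
        intro y
        obtain ⟨j, hj⟩ := hconn x y
        have : (x, y) ∈ relPow E (k + j) := relPow_mono hdiag (Nat.le_add_left j k) hj
        exact hstab j (mem_gball.mpr this)
      have := Finset.card_lt_card hstrict
      omega

end Ball

/-- The key single-graph lemma. -/
theorem main_lemma {V : Type*} [Fintype V] [Nonempty V] (E : Set (V × V))
    (hsymm : ∀ p ∈ E, (p.2, p.1) ∈ E) (hdiag : ∀ x : V, (x, x) ∈ E)
    (hconn : ∀ x y : V, ∃ k : ℕ, (x, y) ∈ relPow E k)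
    (K r : ℕ) (hdeg : ∀ x : V, ({y | (x, y) ∈ E}).ncard ≤ K)
    (hbig : 2 * K ^ r + 1 ≤ Fintype.card V) :
    ∃ σ : V ≃ V, ∀ x : V, (x, σ x) ∈ relPow E (8 * K ^ r) ∧ (x, σ x) ∉ relPow E r := by
  classical
  -- graph distance
  set d : V → V → ℕ := fun x y => Nat.find (hconn x y) with hd_def
  have hd_spec : ∀ x y, (x, y) ∈ relPow E (d x y) := fun x y => Nat.find_spec (hconn x y)
  have hd_le : ∀ {x y : V} {k : ℕ}, (x, y) ∈ relPow E k → d x y ≤ k :=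
    fun {x y k} h => Nat.find_min' (hconn x y) h
  have hd_mem : ∀ {x y : V} {k : ℕ}, d x y ≤ k → (x, y) ∈ relPow E k :=
    fun {x y k} h => relPow_mono hdiag h (hd_spec x y)
  have hd_zero : ∀ {x y : V}, d x y = 0 → x = y := by
    intro x y h
    have := hd_spec x y
    rw [h] at this
    exact this
  have hd_symm : ∀ x y, d x y = d y x := fun x y =>
    le_antisymm (hd_le (relPow_symm hsymm (hd_spec y x))) (hd_le (relPow_symm hsymm (hd_spec x y)))
  have hd_tri : ∀ x y z, d x z ≤ d x y + d y z := fun x y z =>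
    hd_le (relPow_trans (hd_spec x y) (hd_spec y z))
  have hd_self : ∀ x, d x x = 0 := fun x => Nat.le_zero.mp (hd_le (rfl : x = x))
  -- maximal separated set of centers
  set m : ℕ := 2 * K ^ r with hm
  set P : Finset V → Prop := fun S => ∀ a ∈ S, ∀ b ∈ S, a ≠ b → (a, b) ∉ relPow E (2 * m)
      with hP_def
  obtain ⟨x₀⟩ := ‹Nonempty V›
  have hsingle : ({x₀} : Finset V) ∈ Finset.univ.filter P := by
    simp only [Finset.mem_filter, Finset.mem_univ, true_and, hP_def]
    intro a ha b hb hab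
    simp only [Finset.mem_singleton] at ha hb
    exact absurd (ha.trans hb.symm) hab
  obtain ⟨S, hS_mem, hS_max⟩ :=
    Finset.exists_max_image (Finset.univ.filter P) Finset.card ⟨{x₀}, hsingle⟩
  have hS : P S := (Finset.mem_filter.mp hS_mem).2
  have hS_ne : S.Nonempty := by
    have := hS_max _ hsingle
    simp only [Finset.card_singleton] at this
    exact Finset.card_pos.mp (by omega)
  -- coverage
  have cover : ∀ z : V, ∃ c ∈ S, (z, c) ∈ relPow E (2 * m) := by
    intro z
    by_cases hz : z ∈ S
    · exact ⟨z, hz, relPow_mono hdiag (Nat.zero_le _) (rfl : z = z)⟩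
    · have hnP : ¬ P (insert z S) := by
        intro hP
        have hmem : insert z S ∈ Finset.univ.filter P :=
          Finset.mem_filter.mpr ⟨Finset.mem_univ _, hP⟩
        have h1 := hS_max _ hmem
        rw [Finset.card_insert_of_notMem hz] at h1
        omega
      simp only [hP_def, not_forall] at hnP
      obtain ⟨a, ha, b, hb, hab, hE⟩ := hnP
      rw [not_not] at hE
      rcases Finset.mem_insert.mp ha with ha' | ha'
      · rcases Finset.mem_insert.mp hb with hb' | hb'
        · exact absurd (ha'.trans hb'.symm) hab
        · exact ⟨b, hb', ha' ▸ hE⟩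
      · rcases Finset.mem_insert.mp hb with hb' | hb'
        · exact ⟨a, ha', relPow_symm hsymm (hb' ▸ hE)⟩
        · exact absurd hE (hS a ha' b hb' hab)
  -- nearest-center assignment
  have hmin : ∀ z : V, ∃ c ∈ S, ∀ b ∈ S, d z c ≤ d z b :=
    fun z => S.exists_min_image (d z) hS_ne
  choose cfun hcS hcmin using hmin
  have hc_cov : ∀ z, d z (cfun z) ≤ 2 * m := by
    intro z
    obtain ⟨c, hc, hcc⟩ := cover z
    exact le_trans (hcmin z c hc) (hd_le hcc)
  have hc_near : ∀ z : V, ∀ i ∈ S, d z i ≤ m → cfun z = i := by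
    intro z i hi hzi
    by_contra hne
    have h1 : d z (cfun z) ≤ m := le_trans (hcmin z i hi) hzi
    have h2 : d i (cfun z) ≤ 2 * m := by
      calc d i (cfun z) ≤ d i z + d z (cfun z) := hd_tri i z (cfun z)
        _ ≤ m + m := by rw [hd_symm i z]; omega
        _ = 2 * m := by ring
    exact hS i hi (cfun z) (hcS z) (fun h => hne h.symm) (hd_mem h2)
  -- fibers
  set fib : V → Finset V := fun i => Finset.univ.filter (fun z => cfun z = i) with hfib_def
  have hfib_card : ∀ i ∈ S, 2 * K ^ r + 1 ≤ (fib i).card := by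
    intro i hi
    have hsub : gball E m i ⊆ fib i := by
      intro z hz
      have h1 : d z i ≤ m := hd_le (relPow_symm hsymm (mem_gball.mp hz))
      simp only [hfib_def, Finset.mem_filter, Finset.mem_univ, true_and]
      exact hc_near z i hi h1
    have h1 := card_gball_ge hdiag hconn m i
    have h2 := Finset.card_le_card hsub
    have h3 : min (Fintype.card V) (m + 1) = m + 1 := by
      rw [min_eq_right]; omega
    omega
  have hfib_close : ∀ x y : V, cfun x = cfun y → (x, y) ∈ relPow E (8 * K ^ r) := by
    intro x y hxy
    have h1 : d x y ≤ 8 * K ^ r := by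
      calc d x y ≤ d x (cfun x) + d (cfun x) y := hd_tri _ _ _
        _ ≤ 2 * m + 2 * m := by
            have := hc_cov x
            have h2 : d (cfun x) y = d y (cfun y) := by rw [hd_symm, hxy]
            have := hc_cov y
            omega
        _ = 8 * K ^ r := by rw [hm]; ring
    exact hd_mem h1
  -- target sets
  set t : V → Finset V := fun x => fib (cfun x) \ gball E r x with ht_def
  have ht_mem : ∀ {x y : V}, y ∈ t x → cfun y = cfun x ∧ (x, y) ∉ relPow E r := by
    intro x y hy
    rw [ht_def] at hy
    obtain ⟨h1, h2⟩ := Finset.mem_sdiff.mp hy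
    simp only [hfib_def, Finset.mem_filter, Finset.mem_univ, true_and] at h1
    exact ⟨h1, fun h => h2 (mem_gball.mpr h)⟩
  have ht_card : ∀ x, K ^ r + 1 ≤ (t x).card := by
    intro x
    have h1 := hfib_card (cfun x) (hcS x)
    have h2 := card_gball_le hdeg r x
    have h3 : (fib (cfun x)).card - (gball E r x).card ≤ (t x).card := Finset.le_card_sdiff _ _
    omega
  -- Hall condition
  have hall : ∀ A : Finset V, A.card ≤ (A.biUnion t).card := by
    intro A
    have hU : ∀ y ∈ A.biUnion t, cfun y ∈ A.image cfun := by
      intro y hy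
      obtain ⟨x, hxA, hyt⟩ := Finset.mem_biUnion.mp hy
      rw [(ht_mem hyt).1]
      exact Finset.mem_image_of_mem cfun hxA
    rw [Finset.card_eq_sum_card_fiberwise (f := cfun) (t := A.image cfun)
          (fun x hx => Finset.mem_image_of_mem cfun hx),
        Finset.card_eq_sum_card_fiberwise (f := cfun) (t := A.image cfun) hU]
    apply Finset.sum_le_sum
    intro i hi
    obtain ⟨z₀, hz₀A, hz₀i⟩ := Finset.mem_image.mp hi
    have hiS : i ∈ S := hz₀i ▸ hcS z₀
    have hsubU : t z₀ ⊆ (A.biUnion t).filter (fun y => cfun y = i) := by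
      intro y hy
      exact Finset.mem_filter.mpr
        ⟨Finset.mem_biUnion.mpr ⟨z₀, hz₀A, hy⟩, ((ht_mem hy).1).trans hz₀i⟩
    by_cases hcase : fib i ⊆ (A.biUnion t).filter (fun y => cfun y = i)
    · have hAi : A.filter (fun x => cfun x = i) ⊆ fib i := by
        intro x hx
        obtain ⟨_, hxi⟩ := Finset.mem_filter.mp hx
        simp only [hfib_def, Finset.mem_filter, Finset.mem_univ, true_and]
        exact hxi
      exact le_trans (Finset.card_le_card hAi) (Finset.card_le_card hcase)
    · obtain ⟨y, hyf, hyU⟩ := Finset.not_subset.mp hcase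
      have hyi : cfun y = i := by
        simpa [hfib_def] using hyf
      have hAi : A.filter (fun x => cfun x = i) ⊆ gball E r y := by
        intro x hx
        obtain ⟨hxA, hxi⟩ := Finset.mem_filter.mp hx
        have hyx : y ∉ t x := by
          intro h
          exact hyU (Finset.mem_filter.mpr
            ⟨Finset.mem_biUnion.mpr ⟨x, hxA, h⟩, hyi⟩)
        have hyb : y ∈ gball E r x := by
          by_contra hy'
          apply hyx
          rw [ht_def]
          refine Finset.mem_sdiff.mpr ⟨?_, hy'⟩
          simp only [hfib_def, Finset.mem_filter, Finset.mem_univ, true_and]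
          rw [hyi, hxi]
        exact mem_gball.mpr (relPow_symm hsymm (mem_gball.mp hyb))
      have h1 : (A.filter (fun x => cfun x = i)).card ≤ K ^ r :=
        le_trans (Finset.card_le_card hAi) (card_gball_le hdeg r y)
      have h2 := ht_card z₀
      have h3 := Finset.card_le_card hsubU
      omega
  -- Hall's marriage theorem
  obtain ⟨f, hfinj, hft⟩ := (Finset.all_card_le_biUnion_card_iff_existsInjective' t).mp hall
  have hfbij : Function.Bijective f := Finite.injective_iff_bijective.mp hfinj
  refine ⟨Equiv.ofBijective f hfbij, fun x => ?_⟩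
  have h1 := ht_mem (hft x)
  exact ⟨hfib_close x (f x) h1.1.symm, h1.2⟩

/-- For a sequence of nonempty finite connected graphs `(Xₙ, Eₙ)`
(symmetric relations containing the diagonal) with `|Xₙ| → ∞` and uniformly bounded
vertex degrees, for every `r ≥ 1` there are `s, N` such that for every `n ≥ N` there
is a bijection `σₙ : Xₙ → Xₙ` with `(x, σₙ x) ∈ Eₙ^{∘s} ∖ Eₙ^{∘r}` for all `x`. -/
theorem stmt_12 (X : ℕ → Type*) [∀ n, Fintype (X n)] [∀ n, Nonempty (X n)]
    (E : ∀ n, Set (X n × X n))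
    (hsymm : ∀ n, ∀ p ∈ E n, (p.2, p.1) ∈ E n)
    (hdiag : ∀ n, ∀ x : X n, (x, x) ∈ E n)
    (hconn : ∀ n, ∀ x y : X n, ∃ k : ℕ, (x, y) ∈ relPow (E n) k)
    (hcard : ∀ m : ℕ, ∃ N : ℕ, ∀ n ≥ N, m ≤ Fintype.card (X n))
    (K : ℕ) (hdeg : ∀ n, ∀ x : X n, ({y | (x, y) ∈ E n}).ncard ≤ K) :
    ∀ r : ℕ, 1 ≤ r → ∃ s N : ℕ, ∀ n ≥ N, ∃ σ : X n ≃ X n,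
      ∀ x : X n, (x, σ x) ∈ relPow (E n) s ∧ (x, σ x) ∉ relPow (E n) r := by
  intro r _
  obtain ⟨N, hN⟩ := hcard (2 * K ^ r + 1)
  exact ⟨8 * K ^ r, N, fun n hn =>
    main_lemma (E n) (hsymm n) (hdiag n) (hconn n) K r (hdeg n) (hN n hn)⟩
end

section
/- Let X be a finite set and let E ⊆ X × X be a symmetric relation that contains the diagonal {(x,x) : x ∈ X} and is connected (for all x, y ∈ X there is k with (x,y) ∈ E^{∘k}). Let r ≥ 1 and q, s ∈ ℕ satisfy 3q ≤ s and q − r ≥ K, where K = max_{x ∈ X} |{y ∈ X : (x,y) ∈ E^{∘r}}|. Suppose that for every x ∈ X there exists y ∈ X with (x,y) ∉ E^{∘q}. Then there exists a bijection σ : X → X such that for every x ∈ X, (x, σ(x)) ∈ E^{∘s} and (x, σ(x)) ∉ E^{∘r}. -/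
open Finset

theorem Finset.exists_subset_pairwise_not_forall_exists {α : Type*}
    (S : Finset α) {near : α → α → Prop} (hrefl : ∀ a, near a a)
    (hsymm : ∀ a b, near a b → near b a) :
    ∃ R ⊆ S, (R : Set α).Pairwise (fun a b => ¬near a b) ∧ ∀ a ∈ S, ∃ b ∈ R, near a b := by
  classical
  obtain ⟨R, hR, hmax⟩ := (S.powerset.filter fun R : Finset α =>
      (R : Set α).Pairwise fun a b => ¬near a b).exists_max_image card ⟨∅, by simp⟩
  simp only [mem_filter, mem_powerset] at hR hmax
  refine ⟨R, hR.1, hR.2, fun a ha => ?_⟩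
  by_contra! hfar
  have haR : a ∉ R := fun h => hfar a h (hrefl a)
  have hins : ((insert a R : Finset α) : Set α).Pairwise fun a b => ¬near a b := by
    rw [coe_insert, Set.pairwise_insert]
    exact ⟨hR.2, fun b hb _ => ⟨hfar b hb, fun h => hfar b hb (hsymm b a h)⟩⟩
  have := hmax (insert a R) ⟨insert_subset ha hR.1, hins⟩
  rw [card_insert_of_notMem haR] at this
  omega

section RelPow

variable {X : Type*} {E : Set (X × X)}

theorem mem_relPow_add {a b : ℕ} {x y z : X} (hxy : (x, y) ∈ relPow E a)
    (hyz : (y, z) ∈ relPow E b) : (x, z) ∈ relPow E (a + b) := by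
  induction a generalizing x with
  | zero =>
    obtain rfl : x = y := hxy
    simpa using hyz
  | succ a ih =>
    obtain ⟨w, hxw, hwy⟩ := hxy
    rw [Nat.add_right_comm]
    exact ⟨w, hxw, ih hwy⟩

theorem exists_of_mem_relPow_add {a b : ℕ} {x z : X} (h : (x, z) ∈ relPow E (a + b)) :
    ∃ y, (x, y) ∈ relPow E a ∧ (y, z) ∈ relPow E b := by
  induction a generalizing x with
  | zero => exact ⟨x, rfl, by simpa using h⟩
  | succ a ih =>
    rw [Nat.add_right_comm] at h
    obtain ⟨w, hxw, hwz⟩ := h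
    obtain ⟨y, hwy, hyz⟩ := ih hwz
    exact ⟨y, ⟨w, hxw, hwy⟩, hyz⟩

theorem relPow_mono_s13 (hdiag : ∀ x : X, (x, x) ∈ E) : Monotone (relPow E) :=
  monotone_nat_of_le_succ fun _ p hp => ⟨p.1, hdiag p.1, hp⟩

theorem mem_relPow_swap (hsymm : ∀ p ∈ E, (p.2, p.1) ∈ E) {k : ℕ} {x y : X}
    (h : (x, y) ∈ relPow E k) : (y, x) ∈ relPow E k := by
  induction k generalizing x y with
  | zero => exact (show x = y from h).symm
  | succ k ih =>
    obtain ⟨z, hxz, hzy⟩ := h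
    exact mem_relPow_add (ih hzy) (⟨x, hsymm _ hxz, rfl⟩ : (z, x) ∈ relPow E 1)

end RelPow

section RelDist

variable {X : Type*} {E : Set (X × X)}

/-- The path distance of `E`; it is `0` when `y` cannot be reached from `x`. -/
noncomputable def relDist (E : Set (X × X)) (x y : X) : ℕ :=
  sInf {k | (x, y) ∈ relPow E k}

theorem relDist_le {k : ℕ} {x y : X} (h : (x, y) ∈ relPow E k) : relDist E x y ≤ k :=
  Nat.sInf_le h

theorem mem_relPow_relDist {x y : X} (h : ∃ k, (x, y) ∈ relPow E k) :
    (x, y) ∈ relPow E (relDist E x y) :=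
  Nat.sInf_mem h

theorem mem_relPow_iff_relDist_le (hdiag : ∀ x : X, (x, x) ∈ E) {k : ℕ} {x y : X}
    (h : ∃ k, (x, y) ∈ relPow E k) : (x, y) ∈ relPow E k ↔ relDist E x y ≤ k :=
  ⟨relDist_le, fun hk => relPow_mono_s13 hdiag hk (mem_relPow_relDist h)⟩

theorem relDist_self (x : X) : relDist E x x = 0 :=
  Nat.le_zero.1 (relDist_le (show x = x from rfl))

theorem relDist_comm (hsymm : ∀ p ∈ E, (p.2, p.1) ∈ E) (x y : X) :
    relDist E x y = relDist E y x := by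
  unfold relDist
  congr 1
  ext k
  exact ⟨mem_relPow_swap hsymm, mem_relPow_swap hsymm⟩

theorem relDist_triangle (hconn : ∀ x y : X, ∃ k : ℕ, (x, y) ∈ relPow E k) (x y z : X) :
    relDist E x z ≤ relDist E x y + relDist E y z :=
  relDist_le (mem_relPow_add (mem_relPow_relDist (hconn x y)) (mem_relPow_relDist (hconn y z)))

theorem exists_relDist_eq (hconn : ∀ x y : X, ∃ k : ℕ, (x, y) ∈ relPow E k) {x y : X} {t : ℕ}
    (ht : t ≤ relDist E x y) : ∃ z, relDist E x z = t := by
  have h : (x, y) ∈ relPow E (t + (relDist E x y - t)) := by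
    rw [Nat.add_sub_cancel' ht]
    exact mem_relPow_relDist (hconn x y)
  obtain ⟨z, hxz, hzy⟩ := exists_of_mem_relPow_add h
  have := relDist_triangle hconn x z y
  have := relDist_le hxz
  have := relDist_le hzy
  exact ⟨z, by omega⟩

end RelDist

section DistAnnulus

variable {X : Type*} [Fintype X]

def distBall (d : X → X → ℕ) (x : X) (r : ℕ) : Finset X :=
  {y | d x y ≤ r}

def distAnnulus (d : X → X → ℕ) (x : X) (a b : ℕ) : Finset X :=
  {y | a < d x y ∧ d x y ≤ b}

theorem le_card_distAnnulus_relDist {E : Set (X × X)}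
    (hconn : ∀ x y : X, ∃ k : ℕ, (x, y) ∈ relPow E k) {x y : X} {a b : ℕ}
    (hb : b ≤ relDist E x y) : b - a ≤ #(distAnnulus (relDist E) x a b) := by
  rw [← Nat.card_Ioc]
  refine card_le_card_of_surjOn (relDist E x) fun t ht => ?_
  rw [coe_Ioc, Set.mem_Ioc] at ht
  obtain ⟨z, hz⟩ := exists_relDist_eq hconn (ht.2.trans hb)
  exact ⟨z, by simp [distAnnulus, hz, ht], hz⟩

theorem card_le_card_biUnion_distAnnulus [DecidableEq X] {d : X → X → ℕ}
    (d_self : ∀ x, d x x = 0) (d_comm : ∀ x y, d x y = d y x)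
    (d_triangle : ∀ x y z, d x z ≤ d x y + d y z) {r q s m : ℕ} (hqs : 2 * q ≤ s)
    (hball : ∀ x, #(distBall d x r) ≤ m) (hann : ∀ x, m ≤ #(distAnnulus d x r q))
    (A : Finset X) : #A ≤ #(A.biUnion fun x => distAnnulus d x r s) := by
  set N := A.biUnion fun x => distAnnulus d x r s
  have hgap : ∀ a ∈ A, ∀ b ∈ A \ N, d a b ≤ r ∨ s < d a b := by
    intro a ha b hb
    by_contra! h
    exact (mem_sdiff.1 hb).2 (mem_biUnion.2 ⟨a, ha, by simp [distAnnulus, h.1, h.2]⟩)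
  obtain ⟨R, hRB, hRsep, hBcover⟩ := (A \ N).exists_subset_pairwise_not_forall_exists
    (near := fun a b => d a b ≤ r) (fun a => by simp [d_self]) fun a b h => d_comm a b ▸ h
  have hRA : R ⊆ A := hRB.trans sdiff_subset
  have hRfar : (R : Set X).Pairwise fun a b => s < d a b := fun a ha b hb hab =>
    (hgap a (hRA ha) b (hRB hb)).resolve_left (hRsep ha hb hab)
  have hB : #(A \ N) ≤ #R * m := calc
    #(A \ N) ≤ #(R.biUnion fun b => distBall d b r) := card_le_card fun a ha => by
      obtain ⟨b, hb, hab⟩ := hBcover a ha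
      exact mem_biUnion.2 ⟨b, hb, by simp [distBall, d_comm b a, hab]⟩
    _ ≤ #R * m := card_biUnion_le_card_mul _ _ _ fun b _ => hball b
  have hdisj : (R : Set X).PairwiseDisjoint fun b => distAnnulus d b r q := by
    intro b₁ h₁ b₂ h₂ hne
    rw [Function.onFun, disjoint_left]
    intro y hy₁ hy₂
    simp only [distAnnulus, mem_filter, mem_univ, true_and] at hy₁ hy₂
    have := d_triangle b₁ y b₂
    have := hRfar h₁ h₂ hne
    rw [d_comm y b₂] at *
    omega
  have hsub : R.biUnion (fun b => distAnnulus d b r q) ⊆ N \ A := by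
    intro y hy
    obtain ⟨b, hb, hby⟩ := mem_biUnion.1 hy
    simp only [distAnnulus, mem_filter, mem_univ, true_and] at hby
    refine mem_sdiff.2 ⟨mem_biUnion.2 ⟨b, hRA hb, ?_⟩, fun hyA => ?_⟩
    · simp only [distAnnulus, mem_filter, mem_univ, true_and]
      omega
    · have := hgap y hyA b (hRB hb)
      rw [d_comm] at this
      omega
  have hNA : #R * m ≤ #(N \ A) := calc
    #R * m ≤ ∑ b ∈ R, #(distAnnulus d b r q) := by
      simpa using card_nsmul_le_sum R _ m fun b _ => hann b
    _ = #(R.biUnion fun b => distAnnulus d b r q) := (card_biUnion hdisj).symm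
    _ ≤ #(N \ A) := card_le_card hsub
  have hA := card_inter_add_card_sdiff A N
  have hN := card_inter_add_card_sdiff N A
  rw [inter_comm] at hA
  omega

end DistAnnulus

theorem stmt_13_general {X : Type*} [Fintype X] (E : Set (X × X))
    (hsymm : ∀ p ∈ E, (p.2, p.1) ∈ E)
    (hdiag : ∀ x : X, (x, x) ∈ E)
    (hconn : ∀ x y : X, ∃ k : ℕ, (x, y) ∈ relPow E k)
    (r q s : ℕ) (hs : 3 * q ≤ s)
    (hq : ∀ x : X, ({y | (x, y) ∈ relPow E r}).ncard + r ≤ q)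
    (hfar : ∀ x : X, ∃ y : X, (x, y) ∉ relPow E q) :
    ∃ σ : X ≃ X, ∀ x : X, (x, σ x) ∈ relPow E s ∧ (x, σ x) ∉ relPow E r := by
  classical
  have hmem (x y : X) (k : ℕ) := mem_relPow_iff_relDist_le (k := k) hdiag (hconn x y)
  have hball (x : X) : #(distBall (relDist E) x r) ≤ q - r := by
    have hcard : #(distBall (relDist E) x r) = {y | (x, y) ∈ relPow E r}.ncard := by
      rw [← Set.ncard_coe_finset]
      congr 1
      ext y
      simp [distBall, hmem]
    have := hq x
    omega
  have hann (x : X) : q - r ≤ #(distAnnulus (relDist E) x r q) := by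
    obtain ⟨y, hy⟩ := hfar x
    rw [hmem] at hy
    exact le_card_distAnnulus_relDist hconn (y := y) (by omega)
  obtain ⟨f, hf_inj, hf⟩ := (all_card_le_biUnion_card_iff_exists_injective _).1
    (card_le_card_biUnion_distAnnulus relDist_self (relDist_comm hsymm) (relDist_triangle hconn)
      (by omega : 2 * q ≤ s) hball hann)
  refine ⟨Equiv.ofBijective f hf_inj.bijective_of_finite, fun x => ?_⟩
  have hx := hf x
  simp only [distAnnulus, mem_filter, mem_univ, true_and] at hx
  simp only [Equiv.ofBijective_apply, hmem]
  omega

/-- Let `X` be a finite set with a symmetric, reflexive, connected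
relation `E`.  Let `r ≥ 1` and `q, s` satisfy `3q ≤ s` and `q − r ≥ K`, where `K` is the
maximal cardinality of a ball `{y : (x,y) ∈ E^{∘r}}` (expressed below as
`|{y : (x,y) ∈ E^{∘r}}| + r ≤ q` for every `x`).  If every point `x` has some `y` with
`(x,y) ∉ E^{∘q}`, then there is a bijection `σ : X → X` with
`(x, σ x) ∈ E^{∘s} ∖ E^{∘r}` for every `x`. -/
theorem stmt_13 {X : Type*} [Fintype X] (E : Set (X × X))
    (hsymm : ∀ p ∈ E, (p.2, p.1) ∈ E)
    (hdiag : ∀ x : X, (x, x) ∈ E)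
    (hconn : ∀ x y : X, ∃ k : ℕ, (x, y) ∈ relPow E k)
    (r q s : ℕ) (hr : 1 ≤ r) (hs : 3 * q ≤ s)
    (hq : ∀ x : X, ({y | (x, y) ∈ relPow E r}).ncard + r ≤ q)
    (hfar : ∀ x : X, ∃ y : X, (x, y) ∉ relPow E q) :
    ∃ σ : X ≃ X, ∀ x : X, (x, σ x) ∈ relPow E s ∧ (x, σ x) ∉ relPow E r :=
  stmt_13_general E hsymm hdiag hconn r q s hs hq hfar
end

section
/- Let H be a complex Hilbert space and let v₁, …, vₙ be bounded linear operators on H such that vᵢ vᵢ* vᵢ = vᵢ for every i (each vᵢ is a partial isometry) and vᵢ vᵢ* = v_{i−1}* v_{i−1} for every i = 2, …, n. Let v = v₁ v₂ ⋯ vₙ. Then for every ξ ∈ H, ‖(v v* − v) ξ‖ ≤ Σ_{i=1}^{n} ‖(vᵢ vᵢ* − vᵢ) ξ‖. -/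
/-!
Write `P = v₁ P'` with `P' = v₂ ⋯ vₙ`. Since `P' P'* = v₂ v₂* = v₁* v₁` fixes `v₁` from the right,
`P P* = v₁ v₁*` and `P P* - P = (v₁ v₁* - v₁) + v₁ (P' P'* - P')`. A partial isometry has norm at
most `1`, so the triangle inequality and induction on `n` give the bound.
-/

open ContinuousLinearMap

def IsPartialIsometry {R : Type*} [Mul R] [Star R] (a : R) : Prop :=
  a * star a * a = a

namespace IsPartialIsometry

lemma isStarProjection_star_mul_self {R : Type*} [Semigroup R] [StarMul R] {a : R}
    (ha : IsPartialIsometry a) : IsStarProjection (star a * a) where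
  isIdempotentElem := by
    rw [IsIdempotentElem, mul_assoc, ← mul_assoc a, show a * star a * a = a from ha]
  isSelfAdjoint := .star_mul_self a

lemma norm_le_one {E : Type*} [NonUnitalNormedRing E] [StarRing E] [CStarRing E] {a : E}
    (ha : IsPartialIsometry a) : ‖a‖ ≤ 1 := by
  have h : ‖a‖ * ‖a‖ ≤ 1 :=
    CStarRing.norm_star_mul_self (x := a) ▸ ha.isStarProjection_star_mul_self.norm_le
  nlinarith [norm_nonneg a]

end IsPartialIsometry

section Chain

variable {M : Type*} [Monoid M] [StarMul M]

lemma mul_prod_mul_star_prod_of_isChain {a : M} {L : List M}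
    (hpi : ∀ b ∈ a :: L, IsPartialIsometry b)
    (hL : (a :: L).IsChain fun x y => y * star y = star x * x) :
    a * (L.prod * star L.prod) = a := by
  induction L generalizing a with
  | nil => simp
  | cons b L ih =>
    obtain ⟨hab, hL⟩ := List.isChain_cons_cons.mp hL
    have hb : b * (L.prod * star L.prod) = b :=
      ih (fun c hc => hpi c (List.mem_cons_of_mem a hc)) hL
    calc a * ((b :: L).prod * star (b :: L).prod)
        = a * (b * (L.prod * star L.prod) * star b) := by
          simp only [List.prod_cons, star_mul, mul_assoc]
      _ = a * star a * a := by rw [hb, hab, mul_assoc]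
      _ = a := hpi a List.mem_cons_self

end Chain

section Operator

variable {𝕜 H : Type*} [RCLike 𝕜] [NormedAddCommGroup H] [InnerProductSpace 𝕜 H] [CompleteSpace H]

lemma norm_prod_mul_star_prod_sub_prod_apply_le {L : List (H →L[𝕜] H)}
    (hpi : ∀ a ∈ L, IsPartialIsometry a)
    (hL : L.IsChain fun x y => y * star y = star x * x) (ξ : H) :
    ‖(L.prod * star L.prod - L.prod) ξ‖ ≤ (L.map fun a => ‖(a * star a - a) ξ‖).sum := by
  induction L with
  | nil => simp
  | cons a L ih =>
    have hfix := mul_prod_mul_star_prod_of_isChain hpi hL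
    have hsplit : (a :: L).prod * star (a :: L).prod - (a :: L).prod =
        (a * star a - a) + a * (L.prod * star L.prod - L.prod) := by
      rw [List.prod_cons, star_mul, mul_sub, hfix, ← mul_assoc, mul_assoc a, hfix]
      abel
    have hIH := ih (fun b hb => hpi b (List.mem_cons_of_mem a hb)) hL.tail
    calc ‖((a :: L).prod * star (a :: L).prod - (a :: L).prod) ξ‖
        = ‖(a * star a - a) ξ + a ((L.prod * star L.prod - L.prod) ξ)‖ := by rw [hsplit]; rfl
      _ ≤ ‖(a * star a - a) ξ‖ + 1 * ‖(L.prod * star L.prod - L.prod) ξ‖ :=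
          norm_add_le_of_le le_rfl (a.le_of_opNorm_le (hpi a List.mem_cons_self).norm_le_one _)
      _ ≤ ((a :: L).map fun b => ‖(b * star b - b) ξ‖).sum := by
          rw [one_mul, List.map_cons, List.sum_cons]
          gcongr

end Operator

/-- Let `v₁, …, vₙ` be partial isometries on a complex Hilbert space
with `vᵢ vᵢ* = v_{i−1}* v_{i−1}` for `i = 2, …, n`, and let `v = v₁ v₂ ⋯ vₙ`.  Then for
every `ξ`, `‖(v v* − v) ξ‖ ≤ Σᵢ ‖(vᵢ vᵢ* − vᵢ) ξ‖`. -/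
theorem stmt_14 {H : Type*} [NormedAddCommGroup H] [InnerProductSpace ℂ H]
    [CompleteSpace H] (n : ℕ) (v : Fin n → (H →L[ℂ] H))
    (hpi : ∀ i, v i * adjoint (v i) * v i = v i)
    (hchain : ∀ i j : Fin n, (j : ℕ) = (i : ℕ) + 1 →
      v j * adjoint (v j) = adjoint (v i) * v i)
    (ξ : H) :
    ‖((List.ofFn v).prod * adjoint (List.ofFn v).prod - (List.ofFn v).prod) ξ‖ ≤
      ∑ i : Fin n, ‖(v i * adjoint (v i) - v i) ξ‖ := by
  simp only [← star_eq_adjoint] at hpi hchain ⊢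
  have hmem : ∀ a ∈ List.ofFn v, IsPartialIsometry a := by
    simpa only [List.forall_mem_ofFn_iff, IsPartialIsometry] using hpi
  have hL : (List.ofFn v).IsChain fun x y => y * star y = star x * x :=
    List.isChain_ofFn.mpr fun i hi => hchain _ _ rfl
  calc _ ≤ ((List.ofFn v).map fun a => ‖(a * star a - a) ξ‖).sum :=
        norm_prod_mul_star_prod_sub_prod_apply_le hmem hL ξ
    _ = _ := by rw [List.map_ofFn, List.sum_ofFn]; rfl
end

section
/- Let H be a complex Hilbert space, let N be an invertible bounded linear operator on H with bounded inverse N⁻¹, let M be a closed subspace of H, and let ξ ∈ H be orthogonal to N(M), i.e. ⟨ξ, N μ⟩ = 0 for every μ ∈ M. Write N⁻¹ ξ = ξ₁ + ξ₂ with ξ₁ ∈ M and ξ₂ ∈ M^⊥. Then ‖ξ₁‖ ≤ ‖N‖ · ‖N⁻¹‖ · ‖ξ₂‖. -/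
/-!
`N ξ₁` is orthogonal to `ξ = N ξ₁ + N ξ₂`, so Pythagoras gives `‖N ξ₁‖ ≤ ‖N ξ₂‖ ≤ ‖N‖ ‖ξ₂‖`,
and `ξ₁ = N⁻¹ (N ξ₁)` costs the factor `‖N⁻¹‖`.
-/

open ContinuousLinearMap

open scoped InnerProductSpace in
theorem norm_le_norm_of_inner_add_left_eq_zero {𝕜 E : Type*} [RCLike 𝕜] [NormedAddCommGroup E]
    [InnerProductSpace 𝕜 E] {a b : E} (h : ⟪a + b, a⟫_𝕜 = 0) : ‖a‖ ≤ ‖b‖ := by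
  have hperp : ⟪-a, a + b⟫_𝕜 = 0 := by
    rw [inner_neg_left, inner_eq_zero_symm.mp h, neg_zero]
  have hpyth := norm_add_sq_eq_norm_sq_add_norm_sq_of_inner_eq_zero (-a) (a + b) hperp
  rw [neg_add_cancel_left, norm_neg] at hpyth
  nlinarith [norm_nonneg a, norm_nonneg b, sq_nonneg ‖a + b‖]

theorem stmt_15_general {H : Type*} [NormedAddCommGroup H] [InnerProductSpace ℂ H]
    (N Ninv : H →L[ℂ] H) (h₁ : N * Ninv = 1) (h₂ : Ninv * N = 1)
    (M : Submodule ℂ H)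
    (ξ ξ₁ ξ₂ : H) (hperp : ∀ μ ∈ M, (inner ℂ ξ (N μ) : ℂ) = 0)
    (hξ₁ : ξ₁ ∈ M) (hsum : Ninv ξ = ξ₁ + ξ₂) :
    ‖ξ₁‖ ≤ ‖N‖ * ‖Ninv‖ * ‖ξ₂‖ := by
  have hξ : ξ = N ξ₁ + N ξ₂ := by
    rw [← map_add, ← hsum, ← mul_apply_eq_comp, h₁, one_apply_eq_self]
  have hNξ₁ : ‖N ξ₁‖ ≤ ‖N ξ₂‖ :=
    norm_le_norm_of_inner_add_left_eq_zero (hξ ▸ hperp ξ₁ hξ₁)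
  calc ‖ξ₁‖ = ‖Ninv (N ξ₁)‖ := by rw [← mul_apply_eq_comp, h₂, one_apply_eq_self]
    _ ≤ ‖Ninv‖ * ‖N ξ₁‖ := le_opNorm _ _
    _ ≤ ‖Ninv‖ * (‖N‖ * ‖ξ₂‖) := by gcongr; exact hNξ₁.trans (le_opNorm _ _)
    _ = ‖N‖ * ‖Ninv‖ * ‖ξ₂‖ := by ring

/-- Let `N` be an invertible bounded operator on a complex Hilbert
space `H` with bounded inverse `N⁻¹`, `M ⊆ H` a closed subspace, and `ξ ∈ H` orthogonal
to `N(M)`.  If `N⁻¹ ξ = ξ₁ + ξ₂` with `ξ₁ ∈ M`, `ξ₂ ∈ M^⊥`, then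
`‖ξ₁‖ ≤ ‖N‖ ‖N⁻¹‖ ‖ξ₂‖`. -/
theorem stmt_15 {H : Type*} [NormedAddCommGroup H] [InnerProductSpace ℂ H]
    (N Ninv : H →L[ℂ] H) (h₁ : N * Ninv = 1) (h₂ : Ninv * N = 1)
    (M : Submodule ℂ H) (hM : IsClosed (M : Set H))
    (ξ ξ₁ ξ₂ : H) (hperp : ∀ μ ∈ M, (inner ℂ ξ (N μ) : ℂ) = 0)
    (hξ₁ : ξ₁ ∈ M) (hξ₂ : ξ₂ ∈ Mᗮ) (hsum : Ninv ξ = ξ₁ + ξ₂) :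
    ‖ξ₁‖ ≤ ‖N‖ * ‖Ninv‖ * ‖ξ₂‖ :=
  stmt_15_general N Ninv h₁ h₂ M ξ ξ₁ ξ₂ hperp hξ₁ hsum
end
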